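/- arXiv:2601.17630 — 4 statements merged into one kernel-verified Lean document; each statement's English description precedes it below -/
import Mathlib

section
/- Let α ∈ (0,1) be irrational with slowly growing denominators. Then there exists N₀ such that for every integer N ≥ N₀, every a ∈ ℝ and all integers k₁ ≠ k₂: if ‖a + k₁α‖ ≤ (log N)/N and ‖a + k₂α‖ ≤ (log N)/N, then |k₁ − k₂| ≥ N/(log N)⁶. -/
set_option autoImplicit false
open GenContFract Real

/-- Distance from a real number to the nearest integer. -/
noncomputable def distToInt (x : ℝ) : ℝ := |x - round x|

/-- `α` has slowly growing continued fraction denominators: eventually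
`q_{n+1} ≤ q_n (log q_n)²`. -/
def SlowDens (α : ℝ) : Prop :=
  ∃ n₀ : ℕ, ∀ n : ℕ, n₀ ≤ n →
    (GenContFract.of α).dens (n + 1) ≤
      (GenContFract.of α).dens n * (Real.log ((GenContFract.of α).dens n)) ^ 2


section Aux
variable {α : ℝ}

lemma aux_not_term (hirr : Irrational α) (n : ℕ) : ¬(GenContFract.of α).TerminatedAt n := by
  intro h
  obtain ⟨q, hq⟩ := (terminates_iff_rat α).mp ⟨n, h⟩
  exact hirr ⟨q, hq.symm⟩

lemma aux_stream_some (hirr : Irrational α) (n : ℕ) :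
    ∃ ifp, IntFractPair.stream α n = some ifp := by
  cases n with
  | zero => exact ⟨_, IntFractPair.stream_zero α⟩
  | succ m =>
    have h := aux_not_term hirr m
    rw [of_terminatedAt_n_iff_succ_nth_intFractPair_stream_eq_none] at h
    exact Option.ne_none_iff_exists'.mp h

lemma aux_fr_pos (hirr : Irrational α) {n : ℕ} {ifp : IntFractPair ℝ}
    (h : IntFractPair.stream α n = some ifp) : 0 < ifp.fr := by
  have h0 : 0 ≤ ifp.fr := IntFractPair.nth_stream_fr_nonneg h
  rcases h0.lt_or_eq with h1 | h1
  · exact h1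
  · exfalso
    have := IntFractPair.stream_eq_none_of_fr_eq_zero h h1.symm
    obtain ⟨ifp', h'⟩ := aux_stream_some hirr (n + 1)
    rw [this] at h'; cases h'

lemma aux_den_ge_one (hirr : Irrational α) (n : ℕ) : (1 : ℝ) ≤ (GenContFract.of α).dens n := by
  have := GenContFract.succ_nth_fib_le_of_nth_den (v := α) (n := n) (Or.inr (aux_not_term hirr _))
  calc (1:ℝ) = ((Nat.fib 1 : ℕ) : ℝ) := by norm_num
  _ ≤ ((Nat.fib (n+1) : ℕ) : ℝ) := by exact_mod_cast Nat.fib_mono (Nat.le_add_left 1 n)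
  _ ≤ (GenContFract.of α).dens n := this

lemma aux_den_mono : Monotone ((GenContFract.of α).dens) :=
  monotone_nat_of_le_succ fun _ => of_den_mono

lemma aux_den_grow (hirr : Irrational α) (C : ℝ) : ∃ n : ℕ, C < (GenContFract.of α).dens (n + 1) := by
  obtain ⟨m, hm⟩ := exists_nat_gt C
  refine ⟨max m 5, ?_⟩
  have h5 : 5 ≤ max m 5 + 1 := le_trans (le_max_right m 5) (Nat.le_succ _)
  have hfib : ((max m 5 + 1 : ℕ) : ℝ) ≤ (Nat.fib (max m 5 + 1 + 1) : ℝ) := by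
    exact_mod_cast le_trans (Nat.le_fib_self h5) (Nat.fib_le_fib_succ)
  have := GenContFract.succ_nth_fib_le_of_nth_den (v := α) (n := max m 5 + 1) (Or.inr (aux_not_term hirr _))
  have hm' : (C : ℝ) < ((max m 5 + 1 : ℕ) : ℝ) := by
    have : (m:ℝ) ≤ ((max m 5 + 1 : ℕ):ℝ) := by exact_mod_cast Nat.le_succ_of_le (le_max_left m 5)
    linarith
  linarith

end Aux

section Aux2
variable {α : ℝ}

lemma aux_s_some (hirr : Irrational α) (n : ℕ) :
    ∃ b : ℤ, (GenContFract.of α).s.get? n = some ⟨1, (b : ℝ)⟩ := by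
  obtain ⟨ifp, h⟩ := aux_stream_some hirr (n + 1)
  exact ⟨ifp.b, get?_of_eq_some_of_succ_get?_intFractPair_stream h⟩

lemma aux_ints (hirr : Irrational α) (n : ℕ) :
    ∃ a b : ℤ, ((a : ℝ) = (GenContFract.of α).nums n ∧ (b : ℝ) = (GenContFract.of α).dens n) := by
  induction n using Nat.strong_induction_on with
  | _ n IH =>
    match n with
    | 0 =>
      refine ⟨⌊α⌋, 1, ?_, ?_⟩
      · rw [zeroth_num_eq_h, of_h_eq_floor]
      · rw [zeroth_den_eq_one]; norm_num
    | 1 =>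
      obtain ⟨b, hb⟩ := aux_s_some hirr 0
      refine ⟨b * ⌊α⌋ + 1, b, ?_, ?_⟩
      · rw [first_num_eq hb, of_h_eq_floor]; push_cast; ring
      · rw [first_den_eq hb]
    | (m + 2) =>
      obtain ⟨a, b, ha, hb⟩ := IH m (by omega)
      obtain ⟨a', b', ha', hb'⟩ := IH (m + 1) (by omega)
      obtain ⟨c, hc⟩ := aux_s_some hirr (m + 1)
      refine ⟨c * a' + a, c * b' + b, ?_, ?_⟩
      · rw [nums_recurrence hc ha.symm ha'.symm]; push_cast; ring
      · rw [dens_recurrence hc hb.symm hb'.symm]; push_cast; ring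

end Aux2

section Aux3
variable {α : ℝ}

lemma aux_e (hirr : Irrational α) (n : ℕ) :
    1 / ((GenContFract.of α).dens n + (GenContFract.of α).dens (n + 1)) ≤
      (-1 : ℝ) ^ n * ((GenContFract.of α).dens n * α - (GenContFract.of α).nums n) := by
  obtain ⟨ifp, h⟩ := aux_stream_some hirr n
  have hfr : 0 < ifp.fr := aux_fr_pos hirr h
  have hfrne : ifp.fr ≠ 0 := ne_of_gt hfr
  have hsub := sub_convs_eq h
  simp only [if_neg hfrne] at hsub
  set g := GenContFract.of α with hg
  set B := (g.contsAux (n + 1)).b with hB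
  set pB := (g.contsAux n).b with hpB
  have hBd : g.dens n = B := by rw [den_eq_conts_b, nth_cont_eq_succ_nth_contAux]
  have hpB0 : (0:ℝ) ≤ pB := zero_le_of_contsAux_b
  have hB1 : (1:ℝ) ≤ B := hBd ▸ aux_den_ge_one hirr n
  have hstr' : IntFractPair.stream α (n + 1) = some (IntFractPair.of ifp.fr⁻¹) :=
    IntFractPair.stream_succ_of_some h hfrne
  have hgp : g.s.get? n = some ⟨1, ((IntFractPair.of ifp.fr⁻¹).b : ℝ)⟩ :=
    get?_of_eq_some_of_succ_get?_intFractPair_stream hstr'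
  have hbval : ((IntFractPair.of ifp.fr⁻¹).b : ℝ) = ((⌊ifp.fr⁻¹⌋ : ℤ) : ℝ) := rfl
  have hrec : g.contsAux (n + 2) =
      ⟨((⌊ifp.fr⁻¹⌋ : ℤ) : ℝ) * (g.contsAux (n+1)).a + 1 * (g.contsAux n).a,
        ((⌊ifp.fr⁻¹⌋ : ℤ) : ℝ) * B + 1 * pB⟩ := by
    have := contsAux_recurrence hgp rfl rfl
    rw [hbval] at this
    exact this
  have hden1 : g.dens (n + 1) = ((⌊ifp.fr⁻¹⌋ : ℤ) : ℝ) * B + pB := by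
    rw [den_eq_conts_b, nth_cont_eq_succ_nth_contAux, hrec]
    ring
  have hfrinv : (0:ℝ) < ifp.fr⁻¹ := inv_pos.mpr hfr
  have hfloor : ifp.fr⁻¹ < ((⌊ifp.fr⁻¹⌋ : ℤ) : ℝ) + 1 := Int.lt_floor_add_one _
  have hD : (0:ℝ) < ifp.fr⁻¹ * B + pB := by nlinarith
  have hBne : B ≠ 0 := by linarith
  have hconv : g.convs n = g.nums n / B := by rw [conv_eq_num_div_den, hBd]
  have hε : B * α - g.nums n = (-1:ℝ)^n / (ifp.fr⁻¹ * B + pB) := by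
    have h2 : B * (α - g.convs n) = B * α - g.nums n := by
      rw [hconv]; field_simp
    rw [← h2, hsub]
    rw [div_mul_eq_div_div_swap]
    rw [mul_div_cancel₀ _ hBne]
  rw [hBd, hε]
  have hsq : (-1:ℝ)^n * ((-1:ℝ)^n / (ifp.fr⁻¹ * B + pB)) = 1 / (ifp.fr⁻¹ * B + pB) := by
    rw [← mul_div_assoc, ← pow_add, ← two_mul, pow_mul]
    norm_num
  rw [hsq]
  have hlt : B + g.dens (n + 1) ≥ ifp.fr⁻¹ * B + pB := by
    rw [hden1]; nlinarith
  exact one_div_le_one_div_of_le hD hlt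

end Aux3

section Aux4
variable {α : ℝ}

lemma aux_e_pos (hirr : Irrational α) (n : ℕ) :
    0 < (-1 : ℝ) ^ n * ((GenContFract.of α).dens n * α - (GenContFract.of α).nums n) := by
  have h := aux_e hirr n
  have h1 := aux_den_ge_one hirr n
  have h2 := aux_den_ge_one hirr (n + 1)
  have h3 : 0 < 1 / ((GenContFract.of α).dens n + (GenContFract.of α).dens (n + 1)) :=
    one_div_pos.mpr (by linarith)
  linarith

lemma aux_best (hirr : Irrational α) (n : ℕ) (k p : ℤ) (hk : 0 < k)
    (hk' : (k : ℝ) < (GenContFract.of α).dens (n + 1)) :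
    (-1 : ℝ) ^ n * ((GenContFract.of α).dens n * α - (GenContFract.of α).nums n) ≤
      |(k : ℝ) * α - (p : ℝ)| := by
  obtain ⟨A, B, hA, hB⟩ := aux_ints hirr n
  obtain ⟨A', B', hA', hB'⟩ := aux_ints hirr (n + 1)
  have hdet : (GenContFract.of α).nums n * (GenContFract.of α).dens (n + 1) -
      (GenContFract.of α).dens n * (GenContFract.of α).nums (n + 1) = (-1 : ℝ) ^ (n + 1) :=
    SimpContFract.determinant (s := SimpContFract.of α) (aux_not_term hirr n)
  rw [← hA, ← hB, ← hA', ← hB'] at hdet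
  have hsq : ((-1 : ℝ) ^ (n + 1)) * ((-1 : ℝ) ^ (n + 1)) = 1 := by
    rw [← pow_add, ← two_mul, pow_mul]; norm_num
  obtain ⟨x, hxr⟩ : ∃ x : ℤ, (x : ℝ) = (-1 : ℝ) ^ (n + 1) * ((p : ℝ) * B' - (k : ℝ) * A') :=
    ⟨(-1) ^ (n + 1) * (p * B' - k * A'), by push_cast; ring⟩
  obtain ⟨y, hyr⟩ : ∃ y : ℤ, (y : ℝ) = (-1 : ℝ) ^ (n + 1) * ((k : ℝ) * A - (p : ℝ) * B) :=
    ⟨(-1) ^ (n + 1) * (k * A - p * B), by push_cast; ring⟩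
  have hk_eq : (x : ℝ) * B + (y : ℝ) * B' = (k : ℝ) := by
    rw [hxr, hyr]
    linear_combination ((-1 : ℝ) ^ (n + 1) * (k : ℝ)) * hdet + (k : ℝ) * hsq
  have hp_eq : (x : ℝ) * A + (y : ℝ) * A' = (p : ℝ) := by
    rw [hxr, hyr]
    linear_combination ((-1 : ℝ) ^ (n + 1) * (p : ℝ)) * hdet + (p : ℝ) * hsq
  set en : ℝ := (B : ℝ) * α - A with hendef
  set en' : ℝ := (B' : ℝ) * α - A' with hen'def
  have hko : (k : ℝ) * α - (p : ℝ) = (x : ℝ) * en + (y : ℝ) * en' := by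
    rw [hendef, hen'def]; linear_combination α * hk_eq.symm - hp_eq.symm
  set s : ℝ := (-1 : ℝ) ^ n with hsdef
  have hs_abs : |s| = 1 := by rw [hsdef, abs_pow, abs_neg, abs_one, one_pow]
  have hse : 0 < s * en := by
    have := aux_e_pos hirr n; rw [← hA, ← hB] at this; exact this
  have hse' : 0 < -(s * en') := by
    have h0 := aux_e_pos hirr (n + 1)
    rw [← hA', ← hB'] at h0
    have hpow : (-1 : ℝ) ^ (n + 1) = -s := by rw [hsdef, pow_succ]; ring
    rw [hpow] at h0
    have h' : -(s * en') = -s * ((B' : ℝ) * α - A') := by rw [hen'def]; ring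
    rw [h']; exact h0
  have hgoal_eq : (-1 : ℝ) ^ n * ((GenContFract.of α).dens n * α - (GenContFract.of α).nums n)
      = s * en := by rw [← hA, ← hB, hsdef, hendef]
  rw [hgoal_eq, hko]
  have hB1 : (1 : ℝ) ≤ (B : ℝ) := hB ▸ aux_den_ge_one hirr n
  have hB'1 : (1 : ℝ) ≤ (B' : ℝ) := hB' ▸ aux_den_ge_one hirr (n + 1)
  have hkR : (1 : ℝ) ≤ (k : ℝ) := by exact_mod_cast hk
  have hk'B : (k : ℝ) < (B' : ℝ) := by rw [hB']; exact hk'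
  have hsen : s * en ≤ |en| := by
    calc s * en ≤ |s * en| := le_abs_self _
    _ = |s| * |en| := abs_mul _ _
    _ = |en| := by rw [hs_abs, one_mul]
  rcases eq_or_ne y 0 with hy0 | hy0
  · -- y = 0 : k = x * B
    have hyR : (y : ℝ) = 0 := by rw [hy0]; norm_num
    have hxk : (x : ℝ) * B = k := by rw [← hk_eq, hyR]; ring
    have hxne : x ≠ 0 := by
      intro h0
      rw [h0] at hxk
      norm_num at hxk
      linarith
    have hx1 : (1 : ℝ) ≤ |(x : ℝ)| := by
      have h1 : (1 : ℤ) ≤ |x| := Int.one_le_abs hxne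
      calc (1:ℝ) ≤ ((|x| : ℤ) : ℝ) := by exact_mod_cast h1
      _ = |(x : ℝ)| := Int.cast_abs
    calc s * en ≤ |en| := hsen
    _ ≤ |(x : ℝ)| * |en| := le_mul_of_one_le_left (abs_nonneg _) hx1
    _ = |(x : ℝ) * en| := (abs_mul _ _).symm
    _ = |(x : ℝ) * en + (y : ℝ) * en'| := by rw [hyR, zero_mul, add_zero]
  · rcases eq_or_ne x 0 with hx0 | hx0
    · -- x = 0 : k = y * B', contradiction with k < B'
      exfalso
      have hxR : (x : ℝ) = 0 := by rw [hx0]; norm_num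
      have hyk : (y : ℝ) * B' = k := by rw [← hk_eq, hxR]; ring
      have hy_pos : 0 < y := by
        by_contra hneg
        push_neg at hneg
        have hyR : (y : ℝ) ≤ 0 := by exact_mod_cast hneg
        have : (y : ℝ) * B' ≤ 0 := mul_nonpos_of_nonpos_of_nonneg hyR (by linarith)
        linarith
      have hy1 : (1 : ℝ) ≤ (y : ℝ) := by exact_mod_cast hy_pos
      have : (1 : ℝ) * B' ≤ (y : ℝ) * B' := mul_le_mul_of_nonneg_right hy1 (by linarith)
      rw [one_mul] at this
      linarith
    · -- x ≠ 0, y ≠ 0 : opposite signs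
      rcases lt_or_gt_of_ne hy0 with hyneg | hypos
      · -- y ≤ -1 ⇒ x ≥ 1
        have hy1 : (y : ℝ) ≤ -1 := by
          have : y ≤ -1 := by omega
          exact_mod_cast this
        have hx1 : (1 : ℝ) ≤ (x : ℝ) := by
          have hxposZ : 0 < x := by
            by_contra hneg
            push_neg at hneg
            have hxR : (x : ℝ) ≤ 0 := by exact_mod_cast hneg
            have h1 : (x : ℝ) * B ≤ 0 := mul_nonpos_of_nonpos_of_nonneg hxR (by linarith)
            have h2 : (y : ℝ) * B' ≤ (-1) * B' :=
              mul_le_mul_of_nonneg_right hy1 (by linarith)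
            linarith
          exact_mod_cast hxposZ
        have h1 : s * ((x : ℝ) * en + (y : ℝ) * en') ≤ |(x : ℝ) * en + (y : ℝ) * en'| := by
          calc s * ((x : ℝ) * en + (y : ℝ) * en')
              ≤ |s * ((x : ℝ) * en + (y : ℝ) * en')| := le_abs_self _
          _ = |s| * |(x : ℝ) * en + (y : ℝ) * en'| := abs_mul _ _
          _ = _ := by rw [hs_abs, one_mul]
        have e1 : s * ((x : ℝ) * en + (y : ℝ) * en') - s * en
            = ((x : ℝ) - 1) * (s * en) + (-(y : ℝ)) * (-(s * en')) := by ring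
        have e2 : 0 ≤ ((x : ℝ) - 1) * (s * en) := mul_nonneg (by linarith) hse.le
        have e3 : 0 ≤ (-(y : ℝ)) * (-(s * en')) := mul_nonneg (by linarith) hse'.le
        linarith
      · -- y ≥ 1 ⇒ x ≤ -1
        have hy1 : (1 : ℝ) ≤ (y : ℝ) := by exact_mod_cast hypos
        have hx1 : (x : ℝ) ≤ -1 := by
          have hxnegZ : x < 0 := by
            by_contra hneg
            push_neg at hneg
            have hxR : (0 : ℝ) ≤ (x : ℝ) := by exact_mod_cast hneg
            have h1 : 0 ≤ (x : ℝ) * B := mul_nonneg hxR (by linarith)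
            have h2 : (1 : ℝ) * B' ≤ (y : ℝ) * B' :=
              mul_le_mul_of_nonneg_right hy1 (by linarith)
            rw [one_mul] at h2
            linarith
          have : x ≤ -1 := by omega
          exact_mod_cast this
        have h1 : -(s * ((x : ℝ) * en + (y : ℝ) * en'))
            ≤ |(x : ℝ) * en + (y : ℝ) * en'| := by
          calc -(s * ((x : ℝ) * en + (y : ℝ) * en'))
              ≤ |s * ((x : ℝ) * en + (y : ℝ) * en')| := neg_le_abs _
          _ = |s| * |(x : ℝ) * en + (y : ℝ) * en'| := abs_mul _ _
          _ = _ := by rw [hs_abs, one_mul]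
        have e1 : -(s * ((x : ℝ) * en + (y : ℝ) * en')) - s * en
            = (-(x : ℝ) - 1) * (s * en) + (y : ℝ) * (-(s * en')) := by ring
        have e2 : 0 ≤ (-(x : ℝ) - 1) * (s * en) := mul_nonneg (by linarith) hse.le
        have e3 : 0 ≤ (y : ℝ) * (-(s * en')) := mul_nonneg (by linarith) hse'.le
        linarith

end Aux4

section Aux5
variable {α : ℝ}

lemma aux_den_ge_two (hirr : Irrational α) {n : ℕ} (hn : 2 ≤ n) :
    (2 : ℝ) ≤ (GenContFract.of α).dens n := by
  have h := GenContFract.succ_nth_fib_le_of_nth_den (v := α) (n := n)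
    (Or.inr (aux_not_term hirr _))
  have h2 : (2 : ℕ) ≤ Nat.fib (n + 1) := by
    calc (2:ℕ) = Nat.fib 3 := by norm_num
    _ ≤ Nat.fib (n + 1) := Nat.fib_mono (by omega)
  calc (2:ℝ) ≤ ((Nat.fib (n+1) : ℕ) : ℝ) := by exact_mod_cast h2
  _ ≤ _ := h

lemma aux_lb (hirr : Irrational α) (hslow : SlowDens α) :
    ∃ c : ℝ, 0 < c ∧ ∃ M : ℝ, 2 ≤ M ∧ ∀ k p : ℤ, 0 < k →
      ((k : ℝ) < M → c ≤ |(k : ℝ) * α - (p : ℝ)|) ∧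
      (M ≤ (k : ℝ) → 1 / (2 * (k : ℝ) * (Real.log k) ^ 2) ≤ |(k : ℝ) * α - (p : ℝ)|) := by
  obtain ⟨n₀', hn₀⟩ := hslow
  set n₀ : ℕ := max n₀' 2 with hn₀def
  refine ⟨(-1 : ℝ) ^ n₀ * ((GenContFract.of α).dens n₀ * α - (GenContFract.of α).nums n₀),
    aux_e_pos hirr n₀, (GenContFract.of α).dens (n₀ + 1), ?_, ?_⟩
  · exact aux_den_ge_two hirr (by omega)
  intro k p hk
  constructor
  · intro hkM
    exact aux_best hirr n₀ k p hk hkM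
  · intro hMk
    have hkR : (1 : ℝ) ≤ (k : ℝ) := by exact_mod_cast hk
    obtain ⟨m, hm⟩ := aux_den_grow hirr (k : ℝ)
    have hex : ∃ n : ℕ, (k : ℝ) < (GenContFract.of α).dens (n + 1) := ⟨m, hm⟩
    obtain ⟨n, hn, hmin⟩ : ∃ n, (k : ℝ) < (GenContFract.of α).dens (n + 1) ∧
        ∀ m, m < n → ¬((k : ℝ) < (GenContFract.of α).dens (m + 1)) :=
      ⟨Nat.find hex, Nat.find_spec hex, fun m hm => Nat.find_min hex hm⟩
    have hnle : (GenContFract.of α).dens n ≤ (k : ℝ) := by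
      rcases Nat.eq_zero_or_pos n with h0 | hpos
      · rw [h0, zeroth_den_eq_one]; exact hkR
      · obtain ⟨m', rfl⟩ : ∃ m', n = m' + 1 := ⟨n - 1, by omega⟩
        have := hmin m' (by omega)
        linarith [not_lt.mp this]
    have hn₀n : n₀ ≤ n := by
      by_contra hcon
      push_neg at hcon
      have : (GenContFract.of α).dens (n + 1) ≤ (GenContFract.of α).dens (n₀ + 1) :=
        aux_den_mono (by omega)
      linarith
    have hslow' := hn₀ n (le_trans (le_max_left _ _) hn₀n)
    have hden2 : (2 : ℝ) ≤ (GenContFract.of α).dens n :=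
      le_trans (aux_den_ge_two hirr (le_refl 2)) (aux_den_mono (by omega : (2:ℕ) ≤ n))
    have hlogd : 0 ≤ Real.log ((GenContFract.of α).dens n) := Real.log_nonneg (by linarith)
    have hlogle : Real.log ((GenContFract.of α).dens n) ≤ Real.log k :=
      Real.log_le_log (by linarith) hnle
    have hsq : (Real.log ((GenContFract.of α).dens n)) ^ 2 ≤ (Real.log k) ^ 2 :=
      pow_le_pow_left₀ hlogd hlogle 2
    have hlogk : 0 ≤ Real.log k := le_trans hlogd hlogle
    have hprod : (GenContFract.of α).dens n * (Real.log ((GenContFract.of α).dens n)) ^ 2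
        ≤ (k : ℝ) * (Real.log k) ^ 2 := by
      apply mul_le_mul hnle hsq (by positivity) (by linarith)
    have hstep : (GenContFract.of α).dens (n + 1) ≤ (k : ℝ) * (Real.log k) ^ 2 :=
      le_trans hslow' hprod
    have hdpos : (0 : ℝ) < (GenContFract.of α).dens n + (GenContFract.of α).dens (n + 1) := by
      have := aux_den_ge_one hirr (n + 1); linarith
    have h1 : 1 / (2 * (k : ℝ) * (Real.log k) ^ 2)
        ≤ 1 / ((GenContFract.of α).dens n + (GenContFract.of α).dens (n + 1)) := by
      apply one_div_le_one_div_of_le hdpos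
      have := aux_den_mono (α := α) (Nat.le_succ n)
      nlinarith
    calc 1 / (2 * (k : ℝ) * (Real.log k) ^ 2)
        ≤ 1 / ((GenContFract.of α).dens n + (GenContFract.of α).dens (n + 1)) := h1
    _ ≤ (-1 : ℝ) ^ n * ((GenContFract.of α).dens n * α - (GenContFract.of α).nums n) :=
        aux_e hirr n
    _ ≤ |(k : ℝ) * α - (p : ℝ)| := aux_best hirr n k p hk hn

end Aux5

/-- For `α` with slowly growing denominators, two returns of the rotation orbit of `a`
to the `(log N)/N`-neighbourhood of `0` are at least `N/(log N)⁶` apart in time. -/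
theorem stmt9 (α : ℝ) (hα : α ∈ Set.Ioo (0 : ℝ) 1) (hirr : Irrational α)
    (hslow : SlowDens α) :
    ∃ N₀ : ℕ, ∀ N : ℕ, N₀ ≤ N → ∀ a : ℝ, ∀ k₁ k₂ : ℤ, k₁ ≠ k₂ →
      distToInt (a + k₁ * α) ≤ Real.log N / N →
      distToInt (a + k₂ * α) ≤ Real.log N / N →
      (N : ℝ) / (Real.log N) ^ 6 ≤ |(k₁ : ℝ) - (k₂ : ℝ)| := by
  obtain ⟨c, hc, M, hM2, hMain⟩ := aux_lb hirr hslow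
  have hlo := Real.isLittleO_log_id_atTop.def (show (0:ℝ) < c/4 by linarith)
  rw [Filter.eventually_atTop] at hlo
  obtain ⟨x₀, hx₀⟩ := hlo
  obtain ⟨N₁, hN₁⟩ := exists_nat_ge x₀
  refine ⟨max N₁ 8, fun N hN a k₁ k₂ hne h1 h2 => ?_⟩
  set L := Real.log N with hLdef
  have hN8 : (8 : ℝ) ≤ (N : ℝ) := by
    have : (8 : ℕ) ≤ N := le_trans (le_max_right _ _) hN
    exact_mod_cast this
  have hNpos : (0 : ℝ) < (N : ℝ) := by linarith
  have hL2 : 2 < L := by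
    have h8 : Real.log 8 ≤ L := Real.log_le_log (by norm_num) hN8
    have h82 : Real.log 8 = 3 * Real.log 2 := by
      rw [show (8:ℝ) = 2 ^ 3 by norm_num, Real.log_pow]; push_cast; ring
    have := Real.log_two_gt_d9
    rw [h82] at h8
    linarith
  have hLpos : 0 < L := by linarith
  have hLN : 2 * L / N < c := by
    have hb := hx₀ (N : ℝ) (le_trans hN₁ (by exact_mod_cast le_trans (le_max_left _ _) hN))
    simp only [Real.norm_eq_abs, id] at hb
    have : L ≤ c / 4 * N := by
      rw [hLdef]
      calc Real.log N ≤ |Real.log N| := le_abs_self _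
      _ ≤ c / 4 * |(N : ℝ)| := hb
      _ = c / 4 * N := by rw [abs_of_pos hNpos]
    rw [div_lt_iff₀ hNpos]
    nlinarith
  -- the difference of the two orbit returns
  have hdiff : |((k₁ - k₂ : ℤ) : ℝ) * α
      - ((round (a + k₁ * α) - round (a + k₂ * α) : ℤ) : ℝ)| ≤ 2 * L / N := by
    unfold distToInt at h1 h2
    have heq : ((k₁ - k₂ : ℤ) : ℝ) * α
        - ((round (a + k₁ * α) - round (a + k₂ * α) : ℤ) : ℝ)
        = ((a + k₁ * α) - round (a + k₁ * α)) - ((a + k₂ * α) - round (a + k₂ * α)) := by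
      push_cast; ring
    rw [heq]
    calc |((a + k₁ * α) - round (a + k₁ * α)) - ((a + k₂ * α) - round (a + k₂ * α))|
        ≤ |(a + k₁ * α) - round (a + k₁ * α)| + |(a + k₂ * α) - round (a + k₂ * α)| :=
          abs_sub _ _
    _ ≤ L / N + L / N := add_le_add h1 h2
    _ = 2 * L / N := by ring
  set k : ℤ := k₁ - k₂ with hkdef
  set p : ℤ := round (a + k₁ * α) - round (a + k₂ * α) with hpdef
  have hkne : k ≠ 0 := sub_ne_zero.mpr hne
  obtain ⟨k', p', hk'pos, habs_eq, hkabs⟩ : ∃ k' p' : ℤ, 0 < k' ∧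
      |(k' : ℝ) * α - (p' : ℝ)| = |(k : ℝ) * α - (p : ℝ)| ∧ (k' : ℝ) = |(k : ℝ)| := by
    rcases lt_or_gt_of_ne hkne with hneg | hpos
    · refine ⟨-k, -p, by omega, ?_, ?_⟩
      · push_cast
        rw [show -(k : ℝ) * α - -(p : ℝ) = -((k : ℝ) * α - (p : ℝ)) by ring, abs_neg]
      · push_cast
        rw [abs_of_neg (by exact_mod_cast hneg)]
    · refine ⟨k, p, hpos, rfl, ?_⟩
      rw [abs_of_pos (by exact_mod_cast hpos)]
  have hdiff' : |(k' : ℝ) * α - (p' : ℝ)| ≤ 2 * L / N := habs_eq ▸ hdiff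
  have hgoal_eq : |(k₁ : ℝ) - (k₂ : ℝ)| = (k' : ℝ) := by
    rw [hkabs, hkdef]; push_cast; ring_nf
  rw [hgoal_eq]
  have hMk : M ≤ (k' : ℝ) := by
    by_contra hcon
    push_neg at hcon
    have := (hMain k' p' hk'pos).1 hcon
    linarith
  have hlb := (hMain k' p' hk'pos).2 hMk
  -- now conclude
  by_contra hcon
  push_neg at hcon
  have hL6 : (0 : ℝ) < L ^ 6 := by positivity
  have hkL6 : (k' : ℝ) * L ^ 6 < N := (lt_div_iff₀ hL6).mp hcon
  have hk2 : (2 : ℝ) ≤ (k' : ℝ) := le_trans hM2 hMk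
  have hL61 : (1 : ℝ) ≤ L ^ 6 := one_le_pow₀ (by linarith)
  have hkN : (k' : ℝ) ≤ (N : ℝ) := by
    have h := mul_le_mul_of_nonneg_left hL61 (show (0:ℝ) ≤ (k':ℝ) by linarith)
    rw [mul_one] at h
    linarith
  have hlogk_pos : 0 < Real.log (k' : ℝ) := Real.log_pos (by linarith)
  have hlogkL : Real.log (k' : ℝ) ≤ L := Real.log_le_log (by linarith) hkN
  have hD : (0 : ℝ) < 2 * (k' : ℝ) * (Real.log (k' : ℝ)) ^ 2 := by positivity
  have hNle : (N : ℝ) ≤ 2 * L * (2 * (k' : ℝ) * (Real.log (k' : ℝ)) ^ 2) := by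
    have h := le_trans hlb hdiff'
    rw [div_le_div_iff₀ hD hNpos] at h
    linarith
  have hsq : (Real.log (k' : ℝ)) ^ 2 ≤ L ^ 2 := pow_le_pow_left₀ hlogk_pos.le hlogkL 2
  have hNle2 : (N : ℝ) ≤ 4 * L ^ 3 * (k' : ℝ) := by
    have h := mul_le_mul_of_nonneg_left hsq (show (0:ℝ) ≤ 4 * L * (k':ℝ) by positivity)
    nlinarith
  have hL3 : (8 : ℝ) < L ^ 3 := by nlinarith [sq_nonneg (L - 2), sq_nonneg (L + 2)]
  have hstep1 : (k' : ℝ) * L ^ 6 < 4 * L ^ 3 * (k' : ℝ) := lt_of_lt_of_le hkL6 hNle2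
  have hstep2 : L ^ 6 < 4 * L ^ 3 := by
    have hk'pos' : (0 : ℝ) < (k' : ℝ) := by linarith
    have h2 : (k' : ℝ) * L ^ 6 < (k' : ℝ) * (4 * L ^ 3) := by linarith
    exact lt_of_mul_lt_mul_left h2 hk'pos'.le
  have hL3pos : (0 : ℝ) < L ^ 3 := by positivity
  have hstep3 : 8 * L ^ 3 < L ^ 3 * L ^ 3 := by
    have := mul_lt_mul_of_pos_right hL3 hL3pos
    linarith
  have hstep4 : L ^ 3 * L ^ 3 = L ^ 6 := by ring
  linarith
end

section
/- Let α ∈ (0,1) be irrational with slowly growing denominators. Then there exists N₀ such that for every integer N ≥ N₀, every a ∈ ℝ and every integer k with 0 ≤ k ≤ N (log N)^{151}, the number of indices i with 0 ≤ i ≤ k and ‖a + iα‖ ≤ (log N)/N is at most (log N)^{157}. -/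
open GenContFract Real Filter

lemma myNotTerm {α : ℝ} (hirr : Irrational α) (n : ℕ) : ¬(GenContFract.of α).TerminatedAt n := by
  intro h
  have hterm : (GenContFract.of α).Terminates := ⟨n, h⟩
  obtain ⟨q, hq⟩ := GenContFract.exists_rat_eq_of_terminates hterm
  exact hirr ⟨q, hq.symm⟩

lemma myInt {α : ℝ} (hirr : Irrational α) :
    ∀ n : ℕ, (∃ a : ℤ, ((GenContFract.of α).contsAux n).a = (a : ℝ)) ∧
      (∃ b : ℤ, ((GenContFract.of α).contsAux n).b = (b : ℝ)) := by
  have key : ∀ n : ℕ,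
      ((∃ a : ℤ, ((GenContFract.of α).contsAux n).a = (a : ℝ)) ∧
        (∃ b : ℤ, ((GenContFract.of α).contsAux n).b = (b : ℝ))) ∧
      ((∃ a : ℤ, ((GenContFract.of α).contsAux (n+1)).a = (a : ℝ)) ∧
        (∃ b : ℤ, ((GenContFract.of α).contsAux (n+1)).b = (b : ℝ))) := by
    intro n
    induction n with
    | zero =>
      constructor
      · rw [GenContFract.zeroth_contAux_eq_one_zero]
        exact ⟨⟨1, by norm_num⟩, ⟨0, by norm_num⟩⟩
      · rw [GenContFract.first_contAux_eq_h_one]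
        exact ⟨⟨⌊α⌋, by simp [GenContFract.of_h_eq_floor]⟩, ⟨1, by norm_num⟩⟩
    | succ n IH =>
      refine ⟨IH.2, ?_⟩
      obtain ⟨gp, hgp⟩ : ∃ gp, (GenContFract.of α).s.get? n = some gp :=
        Option.ne_none_iff_exists'.1 (myNotTerm hirr n)
      have ha1 : gp.a = 1 :=
        GenContFract.of_partNum_eq_one (GenContFract.partNum_eq_s_a hgp)
      obtain ⟨z, hz⟩ : ∃ z : ℤ, gp.b = (z : ℝ) :=
        GenContFract.exists_int_eq_of_partDen (GenContFract.partDen_eq_s_b hgp)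
      have hrec := GenContFract.contsAux_recurrence hgp rfl rfl
      obtain ⟨⟨pa, hpa⟩, ⟨pb, hpb⟩⟩ := IH.1
      obtain ⟨⟨ca, hca⟩, ⟨cb, hcb⟩⟩ := IH.2
      rw [hrec]
      constructor
      · exact ⟨z * ca + pa, by simp only [ha1, hz, hca, hpa]; push_cast; ring⟩
      · exact ⟨z * cb + pb, by simp only [ha1, hz, hcb, hpb]; push_cast; ring⟩
  exact fun n => (key n).1

-- placeholders for already-proved lemmas
lemma myNumInt {α : ℝ} (hirr : Irrational α) (n : ℕ) :
    ∃ a : ℤ, (GenContFract.of α).nums n = (a : ℝ) := by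
  rw [GenContFract.num_eq_conts_a, GenContFract.nth_cont_eq_succ_nth_contAux]
  exact (myInt hirr (n+1)).1

lemma myDenInt {α : ℝ} (hirr : Irrational α) (n : ℕ) :
    ∃ b : ℤ, (GenContFract.of α).dens n = (b : ℝ) := by
  rw [GenContFract.den_eq_conts_b, GenContFract.nth_cont_eq_succ_nth_contAux]
  exact (myInt hirr (n+1)).2

lemma myDenGeOne {α : ℝ} (hirr : Irrational α) (n : ℕ) :
    (1 : ℝ) ≤ (GenContFract.of α).dens n := by
  have h := GenContFract.succ_nth_fib_le_of_nth_den (v := α) (n := n)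
    (by cases n with
        | zero => exact Or.inl rfl
        | succ m => exact Or.inr (myNotTerm hirr m))
  refine le_trans ?_ h
  have : 1 ≤ Nat.fib (n + 1) := Nat.fib_pos.mpr (Nat.succ_pos n)
  exact_mod_cast this

lemma myCoprime {α : ℝ} (hirr : Irrational α) (n : ℕ) {P Q : ℤ}
    (hP : (GenContFract.of α).nums n = (P : ℝ)) (hQ : (GenContFract.of α).dens n = (Q : ℝ)) :
    IsCoprime Q P := by
  obtain ⟨P', hP'⟩ := myNumInt hirr (n+1)
  obtain ⟨Q', hQ'⟩ := myDenInt hirr (n+1)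
  have hs : (GenContFract.of α).IsSimpContFract := GenContFract.of_isSimpContFract α
  have hdet := SimpContFract.determinant (s := ⟨GenContFract.of α, hs⟩) (n := n)
    (myNotTerm hirr n)
  have hcast : ((P * Q' - Q * P' : ℤ) : ℝ) = ((-1 : ℤ) ^ (n+1) : ℤ) := by
    push_cast
    rw [← hP, ← hQ, ← hP', ← hQ']
    exact_mod_cast hdet
  have hint : P * Q' - Q * P' = (-1) ^ (n+1) := by exact_mod_cast hcast
  rcases Nat.even_or_odd (n+1) with he | ho
  · rw [he.neg_one_pow] at hint
    exact ⟨-P', Q', by linarith⟩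
  · rw [ho.neg_one_pow] at hint
    exact ⟨P', -Q', by linarith⟩

/-- `round` is the nearest integer. -/
lemma myRoundNearest (x : ℝ) (m : ℤ) : |x - round x| ≤ |x - m| := by
  rcases eq_or_ne m (round x) with rfl | hne
  · rfl
  · have h1 : (1 : ℝ) ≤ |(m : ℝ) - round x| := by
      have : m - round x ≠ 0 := sub_ne_zero.mpr hne
      have h0 := Int.one_le_abs this
      calc (1:ℝ) ≤ (|m - round x| : ℤ) := by exact_mod_cast h0
        _ = |(m:ℝ) - round x| := by push_cast; ring_nf
    have h2 := abs_sub_round x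
    have h3 : |(m:ℝ) - round x| ≤ |x - m| + |x - round x| := by
      calc |(m:ℝ) - round x| = |(x - round x) - (x - m)| := by ring_nf
        _ ≤ |x - round x| + |x - m| := abs_sub _ _
        _ = |x - m| + |x - round x| := by ring
    linarith

/-- Spacing lemma: multiples `d·α` with `2d ≤ qₙ` stay `1/(2qₙ)` away from integers. -/
lemma mySpacing {α : ℝ} (hirr : Irrational α) (n : ℕ) (d : ℕ) (hd : 1 ≤ d)
    (hd2 : 2 * (d : ℝ) ≤ (GenContFract.of α).dens n) (m : ℤ) :
    1 / (2 * (GenContFract.of α).dens n) ≤ |(d : ℝ) * α - m| := by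
  obtain ⟨P, hP⟩ := myNumInt hirr n
  obtain ⟨Q, hQ⟩ := myDenInt hirr n
  set q : ℝ := (GenContFract.of α).dens n with hq
  set q' : ℝ := (GenContFract.of α).dens (n+1) with hq'
  have hq1 : (1 : ℝ) ≤ q := myDenGeOne hirr n
  have hq'1 : (1 : ℝ) ≤ q' := myDenGeOne hirr (n+1)
  have hqq' : q ≤ q' := GenContFract.of_den_mono
  have hqpos : (0:ℝ) < q := lt_of_lt_of_le one_pos hq1
  have hq'pos : (0:ℝ) < q' := lt_of_lt_of_le one_pos hq'1
  -- approximation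
  have happrox : |α - (P : ℝ) / q| ≤ 1 / (q * q') := by
    have := GenContFract.abs_sub_convs_le (v := α) (n := n) (myNotTerm hirr n)
    rwa [GenContFract.conv_eq_num_div_den, hP] at this
  -- dPz - mQz ≠ 0
  have hQ1 : (1 : ℤ) ≤ Q := by exact_mod_cast hQ ▸ hq1
  have hdQ : (d : ℤ) < Q := by
    have : 2 * (d : ℝ) ≤ (Q : ℝ) := hQ ▸ hd2
    have h2 : 2 * (d : ℤ) ≤ Q := by exact_mod_cast this
    omega
  have hne : (d : ℤ) * P - m * Q ≠ 0 := by
    intro h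
    have hdvd : Q ∣ (d : ℤ) * P := ⟨m, by linarith [h]⟩
    have : Q ∣ (d : ℤ) := (myCoprime hirr n hP hQ).dvd_of_dvd_mul_right hdvd
    have := Int.le_of_dvd (by exact_mod_cast hd) this
    omega
  -- |dP/q - m| ≥ 1/q
  have hmain : 1 / q ≤ |(d : ℝ) * ((P:ℝ)/q) - m| := by
    have heq : (d : ℝ) * ((P:ℝ)/q) - m = (((d : ℤ) * P - m * Q : ℤ) : ℝ) / q := by
      rw [hQ]; push_cast; field_simp
    rw [heq, abs_div, abs_of_pos hqpos, div_le_div_iff₀ hqpos hqpos]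
    have h1 : (1 : ℤ) ≤ |(d : ℤ) * P - m * Q| := Int.one_le_abs hne
    have h1' : (1 : ℝ) ≤ |(((d : ℤ) * P - m * Q : ℤ) : ℝ)| := by
      rw [← Int.cast_abs]; exact_mod_cast h1
    nlinarith
  have h5 : |(d:ℝ) * α - (d:ℝ) * ((P:ℝ)/q)| ≤ (d:ℝ) / (q * q') := by
    rw [← mul_sub, abs_mul, abs_of_nonneg (by positivity : (0:ℝ) ≤ (d:ℝ))]
    calc (d:ℝ) * |α - (P:ℝ)/q| ≤ (d:ℝ) * (1 / (q * q')) :=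
          mul_le_mul_of_nonneg_left happrox (by positivity)
      _ = (d:ℝ) / (q * q') := by ring
  have h6 : (d:ℝ) / (q * q') ≤ 1 / (2 * q) := by
    rw [div_le_div_iff₀ (by positivity) (by positivity)]
    nlinarith
  have htri : |(d : ℝ) * ((P:ℝ)/q) - m| ≤ |(d:ℝ) * α - m| + |(d:ℝ) * α - (d:ℝ) * ((P:ℝ)/q)| := by
    calc |(d : ℝ) * ((P:ℝ)/q) - m| = |((d:ℝ) * α - m) - ((d:ℝ) * α - (d:ℝ) * ((P:ℝ)/q))| := by
          ring_nf
      _ ≤ _ := abs_sub _ _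
  have hq2 : 1 / q - 1 / (2 * q) = 1 / (2 * q) := by field_simp; ring
  linarith

lemma myCount (S : Finset ℕ) (k s : ℕ) (hs : 0 < s)
    (hS : ∀ i ∈ S, i ≤ k)
    (hgap : ∀ i ∈ S, ∀ j ∈ S, i < j → s ≤ j - i) : S.card ≤ k / s + 1 := by
  have hinj : Set.InjOn (fun i => i / s) S := by
    intro i hi j hj hij
    have hij' : i / s = j / s := hij
    by_contra hne
    rcases lt_or_gt_of_ne hne with h | h
    · have hg := hgap i hi j hj h
      have h1 := Nat.div_add_mod i s
      have h2 := Nat.div_add_mod j s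
      have h3 : i % s < s := Nat.mod_lt _ hs
      have h4 : j % s < s := Nat.mod_lt _ hs
      rw [hij'] at h1
      omega
    · have hg := hgap j hj i hi h
      have h1 := Nat.div_add_mod i s
      have h2 := Nat.div_add_mod j s
      have h3 : i % s < s := Nat.mod_lt _ hs
      have h4 : j % s < s := Nat.mod_lt _ hs
      rw [hij'] at h1
      omega
  have hmaps : ∀ i ∈ S, i / s ∈ Finset.range (k / s + 1) := by
    intro i hi
    rw [Finset.mem_range]
    have := Nat.div_le_div_right (c := s) (hS i hi)
    omega
  calc S.card ≤ (Finset.range (k / s + 1)).card :=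
        Finset.card_le_card_of_injOn _ hmaps hinj
    _ = k / s + 1 := Finset.card_range _

set_option maxHeartbeats 2000000 in
/-- For `α` with slowly growing denominators, an orbit segment of length at most
`N (log N)¹⁵¹` visits the `(log N)/N`-neighbourhood of `0` at most `(log N)¹⁵⁷` times. -/
theorem stmt10 (α : ℝ) (hα : α ∈ Set.Ioo (0 : ℝ) 1) (hirr : Irrational α)
    (hslow : SlowDens α) :
    ∃ N₀ : ℕ, ∀ N : ℕ, N₀ ≤ N → ∀ a : ℝ, ∀ k : ℕ, (k : ℝ) ≤ N * (Real.log N) ^ 151 →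
      (((Finset.range (k + 1)).filter
          (fun i : ℕ => distToInt (a + (i : ℝ) * α) ≤ Real.log N / N)).card : ℝ) ≤
        (Real.log N) ^ 157 := by
  classical
  obtain ⟨n₀, hsl⟩ := hslow
  obtain ⟨C₀, hC₀def⟩ : ∃ x : ℝ, x = (GenContFract.of α).dens (n₀ + 1) := ⟨_, rfl⟩
  have hC₀1 : (1 : ℝ) ≤ C₀ := hC₀def ▸ myDenGeOne hirr (n₀ + 1)
  have hC₀pos : (0 : ℝ) < C₀ := lt_of_lt_of_le one_pos hC₀1
  have hlo := Real.isLittleO_log_id_atTop.def (c := 1 / (10 * C₀)) (by positivity)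
  rw [Filter.eventually_atTop] at hlo
  obtain ⟨x₀, hx₀⟩ := hlo
  refine ⟨max ⌈x₀⌉₊ 21, ?_⟩
  intro N hN a k hk
  have hN21 : (21 : ℝ) ≤ (N : ℝ) := by
    have h0 : (21 : ℕ) ≤ N := le_trans (le_max_right _ _) hN
    exact_mod_cast h0
  have hNpos : (0 : ℝ) < N := by linarith
  obtain ⟨L, hLdef⟩ : ∃ x : ℝ, x = Real.log N := ⟨_, rfl⟩
  rw [← hLdef]
  rw [show Real.log (N : ℝ) = L from hLdef.symm] at hk
  have hexp3 : Real.exp 3 < 21 := by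
    have h1 : Real.exp 3 = Real.exp 1 * Real.exp 1 * Real.exp 1 := by
      rw [show (3:ℝ) = 1 + 1 + 1 by norm_num, Real.exp_add, Real.exp_add]
    have h2 := Real.exp_one_lt_d9
    have h3 := Real.exp_pos 1
    rw [h1]
    nlinarith
  have hlog3 : (3 : ℝ) ≤ L := by
    rw [hLdef, Real.le_log_iff_exp_le hNpos]
    linarith
  have hLpos : (0 : ℝ) < L := by linarith
  have hx₀N : x₀ ≤ (N : ℝ) := by
    have h1 : (⌈x₀⌉₊ : ℕ) ≤ N := le_trans (le_max_left _ _) hN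
    calc x₀ ≤ (⌈x₀⌉₊ : ℝ) := Nat.le_ceil x₀
      _ ≤ (N : ℝ) := by exact_mod_cast h1
  have hlogle : L ≤ (N : ℝ) / (10 * C₀) := by
    have h0 := hx₀ N hx₀N
    simp only [Real.norm_eq_abs, id_eq] at h0
    rw [← hLdef] at h0
    rw [abs_of_nonneg (by linarith : (0:ℝ) ≤ L), abs_of_nonneg hNpos.le] at h0
    calc L ≤ 1 / (10 * C₀) * N := h0
      _ = (N : ℝ) / (10 * C₀) := by ring
  obtain ⟨T, hTdef⟩ : ∃ x : ℝ, x = (N : ℝ) / (5 * L) := ⟨_, rfl⟩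
  have hTpos : 0 < T := by rw [hTdef]; positivity
  have hT2C₀ : 2 * C₀ ≤ T := by
    rw [hTdef, le_div_iff₀ (by positivity)]
    have h := (le_div_iff₀ (by positivity : (0:ℝ) < 10 * C₀)).mp hlogle
    nlinarith
  have hmono : Monotone (GenContFract.of α).dens :=
    monotone_nat_of_le_succ (fun _ => GenContFract.of_den_mono)
  have hex : ∃ m : ℕ, T < (GenContFract.of α).dens m := by
    refine ⟨⌈T⌉₊ + 5, ?_⟩
    have h1 : (⌈T⌉₊ + 5 : ℕ) ≤ Nat.fib (⌈T⌉₊ + 5 + 1) := by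
      have h1a := Nat.le_fib_self (n := ⌈T⌉₊ + 5 + 1) (by omega)
      have h2a := Nat.fib_le_fib_succ (n := ⌈T⌉₊ + 5)
      omega
    have h2 : ((Nat.fib (⌈T⌉₊ + 5 + 1) : ℝ)) ≤ (GenContFract.of α).dens (⌈T⌉₊ + 5) :=
      GenContFract.succ_nth_fib_le_of_nth_den (Or.inr (myNotTerm hirr _))
    have h3 : T ≤ (⌈T⌉₊ : ℝ) := Nat.le_ceil T
    have h4 : ((⌈T⌉₊ : ℕ) : ℝ) < ((⌈T⌉₊ + 5 : ℕ) : ℝ) := by push_cast; linarith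
    calc T < ((⌈T⌉₊ + 5 : ℕ) : ℝ) := lt_of_le_of_lt h3 h4
      _ ≤ ((Nat.fib (⌈T⌉₊ + 5 + 1) : ℝ)) := by exact_mod_cast h1
      _ ≤ _ := h2
  have hfind0 : T < (GenContFract.of α).dens (Nat.find hex) := Nat.find_spec hex
  have hn₁pos : Nat.find hex ≠ 0 := by
    intro h0
    rw [h0, GenContFract.zeroth_den_eq_one] at hfind0
    linarith
  obtain ⟨n, hndef⟩ : ∃ m : ℕ, m = Nat.find hex - 1 := ⟨_, rfl⟩
  have hsucc : Nat.find hex = n + 1 := by omega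
  have hfind : T < (GenContFract.of α).dens (n + 1) := by rw [← hsucc]; exact hfind0
  have hqnT : (GenContFract.of α).dens n ≤ T := by
    have h0 := Nat.find_min hex (m := n) (by omega)
    linarith [not_lt.mp h0]
  obtain ⟨q, hqdef⟩ : ∃ x : ℝ, x = (GenContFract.of α).dens n := ⟨_, rfl⟩
  rw [← hqdef] at hqnT
  have hq1 : (1 : ℝ) ≤ q := hqdef ▸ myDenGeOne hirr n
  have hqpos : (0 : ℝ) < q := lt_of_lt_of_le one_pos hq1
  have hn₀n : n₀ ≤ n := by
    by_contra hcon
    push_neg at hcon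
    have h1 : (GenContFract.of α).dens (n + 1) ≤ (GenContFract.of α).dens (n₀ + 1) :=
      hmono (by omega)
    rw [← hC₀def] at h1
    linarith
  have hslow_n := hsl n hn₀n
  rw [← hqdef] at hslow_n
  have hqN : q ≤ (N : ℝ) := by
    have h0 : T ≤ (N : ℝ) := by
      rw [hTdef, div_le_iff₀ (by positivity)]
      nlinarith
    linarith
  have hlogq0 : 0 ≤ Real.log q := Real.log_nonneg hq1
  have hlogqL : Real.log q ≤ L := by
    rw [hLdef]
    exact Real.log_le_log hqpos hqN
  have hqlow : (N : ℝ) / (10 * L ^ 3) < q / 2 := by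
    have h1 : T < q * L ^ 2 := by
      calc T < (GenContFract.of α).dens (n + 1) := hfind
        _ ≤ q * (Real.log q) ^ 2 := hslow_n
        _ ≤ q * L ^ 2 := by
            have hsq2 : (Real.log q) ^ 2 ≤ L ^ 2 := pow_le_pow_left₀ hlogq0 hlogqL 2
            nlinarith
    rw [div_lt_iff₀ (by positivity)]
    rw [hTdef, div_lt_iff₀ (by positivity)] at h1
    nlinarith
  obtain ⟨Qz, hQz⟩ := myDenInt hirr n
  rw [← hqdef] at hQz
  have hQz1 : (1 : ℤ) ≤ Qz := by
    have h0 := hq1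
    rw [hQz] at h0
    exact_mod_cast h0
  obtain ⟨Qn, hQndef⟩ : ∃ m : ℕ, m = Qz.toNat := ⟨_, rfl⟩
  have hQnq : (Qn : ℝ) = q := by
    have h0 : (Qn : ℤ) = Qz := by rw [hQndef]; exact Int.toNat_of_nonneg (by omega)
    rw [hQz]
    exact_mod_cast h0
  obtain ⟨S, hSdef⟩ : ∃ s : Finset ℕ, s = (Finset.range (k + 1)).filter
      (fun i : ℕ => distToInt (a + (i : ℝ) * α) ≤ L / N) := ⟨_, rfl⟩
  rw [← hSdef]
  have hδq : 2 * (L / N) < 1 / (2 * q) := by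
    have h1 : 1 / (2 * T) ≤ 1 / (2 * q) := by
      apply div_le_div_of_nonneg_left (by norm_num) (by positivity) (by linarith)
    have h2 : (2 : ℝ) * (L / N) < 1 / (2 * T) := by
      have heq : 1 / (2 * T) = L / N * (5 / 2) := by
        rw [hTdef]; field_simp
      have hδpos : (0:ℝ) < L / N := by positivity
      rw [heq]; linarith
    linarith
  have key : ∀ i ∈ S, ∀ j ∈ S, i < j → ¬(2 * (j - i) ≤ Qn) := by
    intro i hi j hj hij hle
    have hd1 : 1 ≤ j - i := by omega
    have hd2 : 2 * ((j - i : ℕ) : ℝ) ≤ (GenContFract.of α).dens n := by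
      rw [← hqdef, ← hQnq]
      exact_mod_cast hle
    have hsp := mySpacing hirr n (j - i) hd1 hd2
      (round (a + (j : ℝ) * α) - round (a + (i : ℝ) * α))
    rw [← hqdef] at hsp
    rw [hSdef] at hi hj
    have hiS := (Finset.mem_filter.mp hi).2
    have hjS := (Finset.mem_filter.mp hj).2
    simp only [distToInt] at hiS hjS
    have heq : ((j - i : ℕ) : ℝ) * α
          - ((round (a + (j : ℝ) * α) : ℤ) - (round (a + (i : ℝ) * α) : ℤ) : ℤ)
        = (a + (j : ℝ) * α - round (a + (j : ℝ) * α))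
          - (a + (i : ℝ) * α - round (a + (i : ℝ) * α)) := by
      push_cast [Nat.cast_sub hij.le]
      ring
    rw [heq] at hsp
    have htri : |(a + (j : ℝ) * α - round (a + (j : ℝ) * α))
          - (a + (i : ℝ) * α - round (a + (i : ℝ) * α))|
        ≤ L / N + L / N := by
      calc |(a + (j : ℝ) * α - round (a + (j : ℝ) * α))
            - (a + (i : ℝ) * α - round (a + (i : ℝ) * α))|
          ≤ |a + (j : ℝ) * α - round (a + (j : ℝ) * α)|
            + |a + (i : ℝ) * α - round (a + (i : ℝ) * α)| := abs_sub _ _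
        _ ≤ L / N + L / N := add_le_add hjS hiS
    have hcomb := le_trans hsp htri
    linarith only [hcomb, hδq]
  have hgap : ∀ i ∈ S, ∀ j ∈ S, i < j → (Qn / 2 + 1) ≤ j - i := by
    intro i hi j hj hij
    have hk2 := key i hi j hj hij
    omega
  have hSk : ∀ i ∈ S, i ≤ k := by
    intro i hi
    rw [hSdef] at hi
    have h0 := (Finset.mem_filter.mp hi).1
    rw [Finset.mem_range] at h0
    omega
  have hcard : S.card ≤ k / (Qn / 2 + 1) + 1 :=
    myCount S k (Qn / 2 + 1) (by omega) hSk hgap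
  have hsq : q / 2 ≤ ((Qn / 2 + 1 : ℕ) : ℝ) := by
    have h1 : Qn + 1 ≤ 2 * (Qn / 2 + 1) := by omega
    have h2 : (Qn : ℝ) + 1 ≤ 2 * ((Qn / 2 + 1 : ℕ) : ℝ) := by exact_mod_cast h1
    rw [← hQnq]
    linarith only [h2]
  have hslow' : (N : ℝ) / (10 * L ^ 3) < ((Qn / 2 + 1 : ℕ) : ℝ) := lt_of_lt_of_le hqlow hsq
  have hs_pos' : (0 : ℝ) < (N : ℝ) / (10 * L ^ 3) :=
    div_pos hNpos (mul_pos (by norm_num) (pow_pos hLpos 3))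
  have hks : (k : ℝ) / ((Qn / 2 + 1 : ℕ) : ℝ) ≤ 10 * L ^ 154 := by
    have h1 : (k : ℝ) / ((Qn / 2 + 1 : ℕ) : ℝ) ≤ ((N : ℝ) * L ^ 151) / ((N : ℝ) / (10 * L ^ 3)) :=
      div_le_div₀ (by positivity) hk hs_pos' hslow'.le
    have h2 : ((N : ℝ) * L ^ 151) / ((N : ℝ) / (10 * L ^ 3)) = 10 * L ^ 154 := by
      rw [div_div_eq_mul_div, div_eq_iff (by positivity : ((N:ℝ) ≠ 0))]
      ring
    rw [h2] at h1
    exact h1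
  have hcardR : (S.card : ℝ) ≤ (k : ℝ) / ((Qn / 2 + 1 : ℕ) : ℝ) + 1 := by
    have h1 : (S.card : ℝ) ≤ ((k / (Qn / 2 + 1) + 1 : ℕ) : ℝ) := by exact_mod_cast hcard
    have h2 : ((k / (Qn / 2 + 1) : ℕ) : ℝ) ≤ (k : ℝ) / ((Qn / 2 + 1 : ℕ) : ℝ) := Nat.cast_div_le
    push_cast at h1
    linarith only [h1, h2]
  have h154 : (1 : ℝ) ≤ L ^ 154 := one_le_pow₀ (by linarith only [hlog3])
  have h27 : (27 : ℝ) ≤ L ^ 3 := by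
    calc (27 : ℝ) = 3 ^ 3 := by norm_num
      _ ≤ L ^ 3 := pow_le_pow_left₀ (by norm_num) hlog3 3
  have hfin : 10 * L ^ 154 + 1 ≤ L ^ 157 := by
    have hmul : L ^ 154 * 27 ≤ L ^ 154 * L ^ 3 :=
      mul_le_mul_of_nonneg_left h27 (by linarith only [h154])
    have hpow : L ^ 157 = L ^ 154 * L ^ 3 := by ring
    rw [hpow]
    linarith only [h154, hmul]
  calc (S.card : ℝ) ≤ (k : ℝ) / ((Qn / 2 + 1 : ℕ) : ℝ) + 1 := hcardR
    _ ≤ 10 * L ^ 154 + 1 := by linarith only [hks]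
    _ ≤ L ^ 157 := hfin
end

section
/- Let η ∈ (0,1/2), set γ = 1/2 − η, let f be a Kochergin roof function with exponent γ, let α ∈ (0,1) be irrational with slowly growing denominators, and let e ∈ (2/3, 1). Then there exists N₀ such that for every integer N ≥ N₀, every integer k with 0 ≤ k ≤ N^e (log N)⁴, and all a, ā ∈ ℝ with |ā − a| ≤ 1/N: if ‖a + iα‖ > 1/(N^e (log N)⁶) for all integers 0 ≤ i ≤ k, then |S_k f(ā) − S_k f(a)| ≤ N^{(3/2 − 0.9η)e − 1}. -/
open Filter

/-- A Kochergin roof function with exponent `γ`: a positive, strictly convex `C²`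
function on `(0,1)` with integral one and power-type singularities of exponent `γ`
at both endpoints. -/
def IsKocherginRoof (γ : ℝ) (f : ℝ → ℝ) : Prop :=
  ContDiffOn ℝ 2 f (Set.Ioo 0 1) ∧
  (∀ x ∈ Set.Ioo (0 : ℝ) 1, 0 < f x) ∧
  (∀ x ∈ Set.Ioo (0 : ℝ) 1, 0 < deriv (deriv f) x) ∧
  (∫ x in (0 : ℝ)..1, f x) = 1 ∧
  ∃ M₁ M₂ M₃ M₄ : ℝ,
    M₁ ∈ Set.Ioo (0 : ℝ) 1 ∧ M₂ ∈ Set.Ioo (0 : ℝ) 1 ∧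
    M₃ ∈ Set.Ioo (0 : ℝ) 1 ∧ M₄ ∈ Set.Ioo (0 : ℝ) 1 ∧
    Tendsto (fun x : ℝ => f x * x ^ γ) (nhdsWithin 0 (Set.Ioi 0)) (nhds M₁) ∧
    Tendsto (fun x : ℝ => f x * (1 - x) ^ γ) (nhdsWithin 1 (Set.Iio 1)) (nhds M₂) ∧
    Tendsto (fun x : ℝ => deriv f x * x ^ (γ + 1)) (nhdsWithin 0 (Set.Ioi 0)) (nhds (-M₃)) ∧
    Tendsto (fun x : ℝ => deriv f x * (1 - x) ^ (γ + 1)) (nhdsWithin 1 (Set.Iio 1)) (nhds M₄)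

/-- Birkhoff sum `S_n f(a) = ∑_{i=0}^{n-1} f({a + iα})` over the rotation by `α`. -/
noncomputable def birkS (α : ℝ) (f : ℝ → ℝ) (n : ℕ) (a : ℝ) : ℝ :=
  ∑ i ∈ Finset.range n, f (Int.fract (a + i * α))

/-- `f_{n,max}(a) = max_{0 ≤ i ≤ n} f({a + iα})`. -/
noncomputable def fMax (α : ℝ) (f : ℝ → ℝ) (n : ℕ) (a : ℝ) : ℝ :=
  (Finset.range (n + 1)).sup' (Finset.nonempty_range_iff.mpr (Nat.succ_ne_zero n))
    (fun i => f (Int.fract (a + i * α)))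


section AuxSep
open GenContFract

lemma distToInt_nonneg (x : ℝ) : 0 ≤ distToInt x := abs_nonneg _

lemma distToInt_le_abs_sub_int (x : ℝ) (z : ℤ) : distToInt x ≤ |x - z| := round_le x z

lemma distToInt_le_half (x : ℝ) : distToInt x ≤ 1 / 2 := abs_sub_round x

lemma distToInt_eq_min (x : ℝ) :
    distToInt x = min (Int.fract x) (1 - Int.fract x) := abs_sub_round_eq_min x

lemma distToInt_add_int (x : ℝ) (z : ℤ) : distToInt (x + z) = distToInt x := by
  unfold distToInt
  rw [round_add_intCast]
  push_cast
  ring_nf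

lemma distToInt_le_abs (x : ℝ) : distToInt x ≤ |x| := by
  simpa using distToInt_le_abs_sub_int x 0

lemma distToInt_triangle (x y : ℝ) : distToInt y ≤ distToInt x + |y - x| := by
  calc distToInt y ≤ |y - round x| := distToInt_le_abs_sub_int y (round x)
    _ ≤ |y - x| + |x - round x| := by
        have := abs_add_le (y - x) (x - round x)
        simpa [sub_add_sub_cancel] using this
    _ = distToInt x + |y - x| := by rw [add_comm]; rfl

/-- The fractional parts of two orbit points differ by an integer from the difference. -/
lemma distToInt_fract_sub (x y : ℝ) : distToInt (x - y) ≤ |Int.fract x - Int.fract y| := by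
  have h : Int.fract x - Int.fract y = (x - y) + (⌊y⌋ - ⌊x⌋ : ℤ) := by
    unfold Int.fract; push_cast; ring
  calc distToInt (x - y) = distToInt ((x - y) + (⌊y⌋ - ⌊x⌋ : ℤ)) :=
        (distToInt_add_int _ _).symm
    _ = distToInt (Int.fract x - Int.fract y) := by rw [← h]
    _ ≤ |Int.fract x - Int.fract y| := distToInt_le_abs _

lemma of_not_terminatedAt (α : ℝ) (hirr : Irrational α) (n : ℕ) :
    ¬(GenContFract.of α).TerminatedAt n := by
  intro h
  obtain ⟨q, hq⟩ := exists_rat_eq_of_terminates ⟨n, h⟩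
  exact hirr ⟨q, hq.symm⟩

lemma dens_monotone (α : ℝ) : Monotone fun n => (GenContFract.of α).dens n :=
  monotone_nat_of_le_succ fun _ => of_den_mono

lemma one_le_dens (α : ℝ) (n : ℕ) : 1 ≤ (GenContFract.of α).dens n := by
  have h0 : (GenContFract.of α).dens 0 = 1 := zeroth_den_eq_one
  have := dens_monotone α (Nat.zero_le n)
  simpa [h0] using this

lemma exists_int_num_den (α : ℝ) (hirr : Irrational α) (n : ℕ) :
    ∃ P Q P' Q' : ℤ, (GenContFract.of α).nums n = P ∧ (GenContFract.of α).dens n = Q ∧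
      (GenContFract.of α).nums (n + 1) = P' ∧ (GenContFract.of α).dens (n + 1) = Q' := by
  induction n with
  | zero =>
    obtain ⟨gp, hgp⟩ : ∃ gp, (GenContFract.of α).s.get? 0 = some gp :=
      Option.ne_none_iff_exists'.1 (of_not_terminatedAt α hirr 0)
    obtain ⟨ha, z, hz⟩ := of_partNum_eq_one_and_exists_int_partDen_eq hgp
    refine ⟨⌊α⌋, 1, z * ⌊α⌋ + 1, z, ?_, ?_, ?_, ?_⟩
    · rw [zeroth_num_eq_h, of_h_eq_floor]
    · rw [zeroth_den_eq_one]; norm_num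
    · rw [first_num_eq hgp, ha, hz, of_h_eq_floor]; push_cast; ring
    · rw [first_den_eq hgp, hz]
  | succ n ih =>
    obtain ⟨P, Q, P', Q', hP, hQ, hP', hQ'⟩ := ih
    obtain ⟨gp, hgp⟩ : ∃ gp, (GenContFract.of α).s.get? (n + 1) = some gp :=
      Option.ne_none_iff_exists'.1 (of_not_terminatedAt α hirr (n + 1))
    obtain ⟨ha, z, hz⟩ := of_partNum_eq_one_and_exists_int_partDen_eq hgp
    refine ⟨P', Q', z * P' + P, z * Q' + Q, hP', hQ', ?_, ?_⟩
    · rw [nums_recurrence hgp hP hP', ha, hz]; push_cast; ring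
    · rw [dens_recurrence hgp hQ hQ', ha, hz]; push_cast; ring

lemma exists_coprime_num_den (α : ℝ) (hirr : Irrational α) (n : ℕ) :
    ∃ P Q : ℤ, 0 < Q ∧ (GenContFract.of α).nums n = P ∧
      (GenContFract.of α).dens n = Q ∧ IsCoprime P Q := by
  obtain ⟨P, Q, P', Q', hP, hQ, hP', hQ'⟩ := exists_int_num_den α hirr n
  have hdet : ((GenContFract.of α).nums n) * ((GenContFract.of α).dens (n + 1)) -
      ((GenContFract.of α).dens n) * ((GenContFract.of α).nums (n + 1)) = (-1) ^ (n + 1) :=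
    SimpContFract.determinant (s := ⟨GenContFract.of α, of_isSimpContFract α⟩)
      (of_not_terminatedAt α hirr n)
  have hdetZ : P * Q' - Q * P' = (-1) ^ (n + 1) := by
    have hcast : ((P * Q' - Q * P' : ℤ) : ℝ) = (((-1 : ℤ) ^ (n + 1) : ℤ) : ℝ) := by
      push_cast
      rw [← hP, ← hQ, ← hP', ← hQ', hdet]
    exact_mod_cast hcast
  have hQpos : 0 < Q := by
    have h1 : (1 : ℝ) ≤ (GenContFract.of α).dens n := one_le_dens α n
    rw [hQ] at h1
    exact_mod_cast lt_of_lt_of_le zero_lt_one h1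
  refine ⟨P, Q, hQpos, hP, hQ, ⟨(-1) ^ (n + 1) * Q', (-1) ^ (n + 1) * (-P'), ?_⟩⟩
  have hsq : ((-1 : ℤ) ^ (n + 1)) * ((-1) ^ (n + 1)) = 1 := by
    rw [← pow_add]
    exact Even.neg_one_pow ⟨n + 1, rfl⟩
  have hring : (-1 : ℤ) ^ (n + 1) * Q' * P + (-1) ^ (n + 1) * (-P') * Q
      = (-1) ^ (n + 1) * (P * Q' - Q * P') := by ring
  rw [hring, hdetZ, hsq]

lemma distToInt_int_div (a Q : ℤ) (hQ : 0 < Q) (hnd : ¬(Q ∣ a)) :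
    1 / (Q : ℝ) ≤ distToInt ((a : ℝ) / Q) := by
  unfold distToInt
  set z := round ((a : ℝ) / Q) with hz
  have hQR : (0 : ℝ) < (Q : ℝ) := by exact_mod_cast hQ
  have heq : (a : ℝ) / Q - z = ((a - z * Q : ℤ) : ℝ) / Q := by
    push_cast; field_simp
  rw [heq, abs_div, abs_of_pos hQR]
  have h1 : a - z * Q ≠ 0 := by
    intro h
    exact hnd ⟨z, by rw [mul_comm]; omega⟩
  have h2 : (1 : ℝ) ≤ |((a - z * Q : ℤ) : ℝ)| := by
    rw [← Int.cast_abs]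
    exact_mod_cast Int.one_le_abs h1
  gcongr

lemma sep_lemma (α : ℝ) (hirr : Irrational α) (m k : ℕ) (hk : 1 ≤ k)
    (hQk : (2 * k : ℝ) < (GenContFract.of α).dens m) :
    ∀ i : ℕ, 1 ≤ i → i ≤ k →
      1 / (2 * (GenContFract.of α).dens m) ≤ distToInt (i * α) := by
  obtain ⟨P, Q, hQpos, hP, hQ, hcop⟩ := exists_coprime_num_den α hirr m
  have hQR : (0 : ℝ) < (Q : ℝ) := by exact_mod_cast hQpos
  have hkQ : (2 * k : ℝ) < (Q : ℝ) := by rwa [hQ] at hQk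
  have happrox : |α - (P : ℝ) / Q| ≤ 1 / ((Q : ℝ) * Q) := by
    have h1 := abs_sub_convs_le (v := α) (n := m) (of_not_terminatedAt α hirr m)
    rw [conv_eq_num_div_den, hP, hQ] at h1
    refine h1.trans ?_
    have hmono : (Q : ℝ) ≤ (GenContFract.of α).dens (m + 1) := by
      rw [← hQ]; exact dens_monotone α (Nat.le_succ m)
    have hd1 : (0 : ℝ) < (GenContFract.of α).dens (m + 1) :=
      lt_of_lt_of_le zero_lt_one (one_le_dens α (m + 1))
    rw [div_le_div_iff₀ (by positivity) (by positivity)]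
    nlinarith
  intro i hi hik
  have hiR : (1 : ℝ) ≤ (i : ℝ) := by exact_mod_cast hi
  have hikR : (i : ℝ) ≤ (k : ℝ) := by exact_mod_cast hik
  -- i * P / Q is at distance ≥ 1/Q from the integers
  have hndvd : ¬(Q ∣ (i : ℤ) * P) := by
    intro hdvd
    have hQi : Q ∣ (i : ℤ) := (hcop.symm.dvd_of_dvd_mul_right) hdvd
    have : Q ≤ (i : ℤ) := Int.le_of_dvd (by exact_mod_cast hi) hQi
    have : (Q : ℝ) ≤ (i : ℝ) := by exact_mod_cast this
    nlinarith
  have hrat : 1 / (Q : ℝ) ≤ distToInt (((i : ℤ) * P : ℤ) / Q) :=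
    distToInt_int_div _ Q hQpos hndvd
  have hclose : |(((i : ℤ) * P : ℤ) : ℝ) / Q - i * α| ≤ (k : ℝ) / ((Q : ℝ) * Q) := by
    have : (((i : ℤ) * P : ℤ) : ℝ) / Q - i * α = -((i : ℝ) * (α - (P : ℝ) / Q)) := by
      push_cast; field_simp; ring
    rw [this, abs_neg, abs_mul, abs_of_nonneg (by positivity : (0:ℝ) ≤ (i:ℝ))]
    calc (i : ℝ) * |α - (P : ℝ) / Q| ≤ (k : ℝ) * (1 / ((Q : ℝ) * Q)) := by
          apply mul_le_mul hikR happrox (abs_nonneg _) (by positivity)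
      _ = (k : ℝ) / ((Q : ℝ) * Q) := by ring
  have htri := distToInt_triangle (i * α) ((((i : ℤ) * P : ℤ) : ℝ) / Q)
  have hlow : 1 / (Q : ℝ) - (k : ℝ) / ((Q : ℝ) * Q) ≤ distToInt (i * α) := by
    have := hrat.trans htri
    have habs : |(((i : ℤ) * P : ℤ) : ℝ) / Q - (i : ℝ) * α| ≤ (k : ℝ) / ((Q : ℝ) * Q) := hclose
    linarith
  have hhalf : 1 / (2 * (Q : ℝ)) ≤ 1 / (Q : ℝ) - (k : ℝ) / ((Q : ℝ) * Q) := by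
    rw [div_sub_div _ _ (by positivity) (by positivity : ((Q:ℝ) * Q) ≠ 0)]
    rw [div_le_div_iff₀ (by positivity) (by positivity)]
    nlinarith
  rw [hQ]
  linarith

lemma key_sep (α : ℝ) (hirr : Irrational α) (hslow : SlowDens α) :
    ∃ A : ℝ, 1 ≤ A ∧ ∀ k : ℕ, 1 ≤ k → ∀ i : ℕ, 1 ≤ i → i ≤ k →
      1 / (2 * max A ((2 * k) * Real.log (2 * k) ^ 2)) ≤ distToInt (i * α) := by
  obtain ⟨n₀, hn₀⟩ := hslow
  set A := (GenContFract.of α).dens n₀ with hA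
  refine ⟨A, one_le_dens α n₀, ?_⟩
  intro k hk i hi hik
  have hex : ∃ m, (2 * k : ℝ) < (GenContFract.of α).dens m := by
    refine ⟨5 + 2 * k, ?_⟩
    have h1 : (5 + 2 * k : ℕ) ≤ Nat.fib (5 + 2 * k) := Nat.le_fib_self (by omega)
    have h2 : Nat.fib (5 + 2 * k) ≤ Nat.fib (5 + 2 * k + 1) := Nat.fib_le_fib_succ
    have h3 : (Nat.fib (5 + 2 * k + 1) : ℝ) ≤ (GenContFract.of α).dens (5 + 2 * k) :=
      succ_nth_fib_le_of_nth_den (Or.inr (of_not_terminatedAt α hirr _))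
    have : ((5 + 2 * k : ℕ) : ℝ) ≤ (GenContFract.of α).dens (5 + 2 * k) := by
      refine le_trans ?_ h3
      exact_mod_cast h1.trans h2
    push_cast at this
    nlinarith [this]
  classical
  have hm1 : Nat.find hex ≠ 0 := by
    intro h0
    have hspec0 : (2 * k : ℝ) < (GenContFract.of α).dens (Nat.find hex) := Nat.find_spec hex
    rw [h0] at hspec0
    have : (2 * k : ℝ) < 1 := by simpa [zeroth_den_eq_one] using hspec0
    have : (1 : ℝ) ≤ (k : ℝ) := by exact_mod_cast hk
    linarith
  obtain ⟨m', hmeq⟩ : ∃ m', Nat.find hex = m' + 1 := ⟨Nat.find hex - 1, by omega⟩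
  have hspec : (2 * k : ℝ) < (GenContFract.of α).dens (m' + 1) := by
    rw [← hmeq]; exact Nat.find_spec hex
  have hprev : (GenContFract.of α).dens m' ≤ (2 * k : ℝ) := by
    by_contra hcon
    push_neg at hcon
    exact (Nat.find_min hex (m := m') (by omega)) hcon
  have hdens_bound : (GenContFract.of α).dens (m' + 1) ≤
      max A ((2 * k) * Real.log (2 * k) ^ 2) := by
    rcases le_or_gt n₀ m' with hcase | hcase
    · refine le_trans (hn₀ m' hcase) (le_max_of_le_right ?_)
      have h1 : (1 : ℝ) ≤ (GenContFract.of α).dens m' := one_le_dens α m'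
      have hklarge : (1 : ℝ) ≤ 2 * (k : ℝ) := by
        have : (1 : ℝ) ≤ (k : ℝ) := by exact_mod_cast hk
        linarith
      have hlog1 : Real.log ((GenContFract.of α).dens m') ≤ Real.log (2 * k) := by
        apply Real.log_le_log (by linarith)
        exact_mod_cast hprev
      have hlog0 : 0 ≤ Real.log ((GenContFract.of α).dens m') :=
        Real.log_nonneg h1
      have hsq : Real.log ((GenContFract.of α).dens m') ^ 2 ≤ Real.log (2 * k) ^ 2 := by
        apply pow_le_pow_left₀ hlog0 hlog1
      exact mul_le_mul hprev hsq (by positivity) (by positivity)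
    · have hmono : (GenContFract.of α).dens (m' + 1) ≤ A := by
        rw [hA]
        exact dens_monotone α (by omega : m' + 1 ≤ n₀)
      exact le_trans hmono (le_max_left _ _)
  have hpos1 : (0 : ℝ) < (GenContFract.of α).dens (m' + 1) :=
    lt_of_lt_of_le zero_lt_one (one_le_dens α _)
  have := sep_lemma α hirr (m' + 1) k hk hspec i hi hik
  refine le_trans ?_ this
  have hA1 : (1 : ℝ) ≤ A := one_le_dens α n₀
  have hmaxpos : (0 : ℝ) < 2 * max A ((2 * k) * Real.log (2 * k) ^ 2) := by
    have : (0 : ℝ) < max A ((2 * k) * Real.log (2 * k) ^ 2) :=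
      lt_of_lt_of_le (by linarith) (le_max_left _ _)
    linarith
  rw [div_le_div_iff₀ hmaxpos (by linarith)]
  nlinarith [hdens_bound]


lemma deriv_bound (p : ℝ) (hp : 0 < p) (f : ℝ → ℝ)
    (hC2 : ContDiffOn ℝ 2 f (Set.Ioo 0 1)) (M₃ M₄ : ℝ)
    (h3 : Tendsto (fun x : ℝ => deriv f x * x ^ p) (nhdsWithin 0 (Set.Ioi 0)) (nhds (-M₃)))
    (h4 : Tendsto (fun x : ℝ => deriv f x * (1 - x) ^ p) (nhdsWithin 1 (Set.Iio 1)) (nhds M₄)) :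
    ∃ C : ℝ, 1 ≤ C ∧ ∀ x ∈ Set.Ioo (0:ℝ) 1, |deriv f x| ≤ C * (min x (1 - x)) ^ (-p) := by
  have habs : ∀ (a b : ℝ), |a| ≤ |a - b| + |b| := fun a b => by
    calc |a| = |a - b + b| := by ring_nf
      _ ≤ |a - b| + |b| := abs_add_le _ _
  -- near 0
  have h3' : ∀ᶠ x in nhdsWithin (0:ℝ) (Set.Ioi 0), |deriv f x| * x ^ p ≤ |M₃| + 1 := by
    have hev := Metric.tendsto_nhds.mp h3 1 one_pos
    filter_upwards [hev, self_mem_nhdsWithin] with x hx hx0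
    rw [Real.dist_eq] at hx
    have h0 : (0:ℝ) < x := hx0
    have h1 : |deriv f x * x ^ p| ≤ |M₃| + 1 := by
      have := habs (deriv f x * x ^ p) (-M₃)
      rw [abs_neg] at this
      linarith
    rwa [abs_mul, abs_of_nonneg (Real.rpow_nonneg h0.le p)] at h1
  obtain ⟨ε₁, hε₁, hsub₁⟩ := mem_nhdsGT_iff_exists_Ioo_subset.mp h3'
  -- near 1
  have h4' : ∀ᶠ x in nhdsWithin (1:ℝ) (Set.Iio 1), |deriv f x| * (1 - x) ^ p ≤ |M₄| + 1 := by
    have hev := Metric.tendsto_nhds.mp h4 1 one_pos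
    filter_upwards [hev, self_mem_nhdsWithin] with x hx hx1
    rw [Real.dist_eq] at hx
    have h0 : x < 1 := hx1
    have h1 : |deriv f x * (1 - x) ^ p| ≤ |M₄| + 1 := by
      have := habs (deriv f x * (1 - x) ^ p) M₄
      linarith
    rwa [abs_mul, abs_of_nonneg (Real.rpow_nonneg (by linarith) p)] at h1
  obtain ⟨ε₂, hε₂, hsub₂⟩ := mem_nhdsLT_iff_exists_Ioo_subset.mp h4'
  -- middle compact piece
  set a : ℝ := min (ε₁ / 2) (1 / 4) with ha
  set b : ℝ := max ((1 + ε₂) / 2) (3 / 4) with hb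
  have hε₁0 : (0:ℝ) < ε₁ := hε₁
  have hε₂1 : ε₂ < 1 := hε₂
  have ha0 : 0 < a := by apply lt_min (by linarith) (by norm_num)
  have hb1 : b < 1 := by apply max_lt (by linarith) (by norm_num)
  have hab : a ≤ b := le_trans (min_le_right _ _) (le_trans (by norm_num) (le_max_right _ _))
  have hcont : ContinuousOn (deriv f) (Set.Ioo 0 1) :=
    (hC2.deriv_of_isOpen (m := 1) isOpen_Ioo (by norm_num)).continuousOn
  have hKsub : Set.Icc a b ⊆ Set.Ioo (0:ℝ) 1 := fun t ht =>
    ⟨lt_of_lt_of_le ha0 ht.1, lt_of_le_of_lt ht.2 hb1⟩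
  obtain ⟨C₂, hC₂⟩ := (isCompact_Icc (a := a) (b := b)).exists_bound_of_continuousOn
    (hcont.mono hKsub)
  refine ⟨max (max (|M₃| + 1) (|M₄| + 1)) (max C₂ 1), le_trans (by norm_num)
    (le_trans (le_max_right C₂ 1) (le_max_right _ _)), ?_⟩
  set C := max (max (|M₃| + 1) (|M₄| + 1)) (max C₂ 1) with hC
  intro x hx
  obtain ⟨hx0, hx1⟩ := hx
  have hmin0 : 0 < min x (1 - x) := lt_min hx0 (by linarith)
  have hrpow1 : (1:ℝ) ≤ (min x (1 - x)) ^ (-p) := by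
    apply Real.one_le_rpow_of_pos_of_le_one_of_nonpos hmin0
    · calc min x (1 - x) ≤ x := min_le_left _ _
        _ ≤ 1 := by linarith
    · linarith
  rcases lt_or_ge x a with hxa | hxa
  · -- near 0
    have hmem : x ∈ Set.Ioo (0:ℝ) ε₁ := ⟨hx0, lt_of_lt_of_le hxa (le_trans (min_le_left _ _) (by linarith))⟩
    have h1 : |deriv f x| * x ^ p ≤ |M₃| + 1 := hsub₁ hmem
    have hxp : (0:ℝ) < x ^ p := Real.rpow_pos_of_pos hx0 p
    have h2 : |deriv f x| ≤ (|M₃| + 1) * x ^ (-p) := by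
      rw [Real.rpow_neg hx0.le]
      calc |deriv f x| = |deriv f x| * x ^ p * (x ^ p)⁻¹ := by field_simp
        _ ≤ (|M₃| + 1) * (x ^ p)⁻¹ := mul_le_mul_of_nonneg_right h1 (by positivity)
    refine h2.trans ?_
    have h3'' : x ^ (-p) ≤ (min x (1 - x)) ^ (-p) :=
      Real.rpow_le_rpow_of_nonpos hmin0 (min_le_left _ _) (by linarith)
    have hM3C : |M₃| + 1 ≤ C := le_trans (le_max_left _ _) (le_max_left _ _)
    exact mul_le_mul hM3C h3'' (by positivity) (by positivity)
  · rcases le_or_gt x b with hxb | hxb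
    · -- middle
      have hmem : x ∈ Set.Icc a b := ⟨hxa, hxb⟩
      have h1 : |deriv f x| ≤ C₂ := by
        have := hC₂ x hmem
        rwa [Real.norm_eq_abs] at this
      have hC₂C : C₂ ≤ C := le_trans (le_max_left C₂ 1) (le_max_right _ _)
      calc |deriv f x| ≤ C₂ := h1
        _ = C₂ * 1 := by ring
        _ ≤ C * (min x (1 - x)) ^ (-p) := by
            have hC0 : (0:ℝ) ≤ C := le_trans (by norm_num)
              (le_trans (le_max_right C₂ 1) (le_max_right _ _))
            exact mul_le_mul hC₂C hrpow1 (by norm_num) hC0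
    · -- near 1
      have hmem : x ∈ Set.Ioo ε₂ 1 := ⟨lt_of_le_of_lt (le_trans (by linarith : ε₂ ≤ (1 + ε₂)/2) (le_max_left _ _)) hxb, hx1⟩
      have h1 : |deriv f x| * (1 - x) ^ p ≤ |M₄| + 1 := hsub₂ hmem
      have h1x : (0:ℝ) < 1 - x := by linarith
      have hxp : (0:ℝ) < (1 - x) ^ p := Real.rpow_pos_of_pos h1x p
      have h2 : |deriv f x| ≤ (|M₄| + 1) * (1 - x) ^ (-p) := by
        rw [Real.rpow_neg h1x.le]
        calc |deriv f x| = |deriv f x| * (1 - x) ^ p * ((1 - x) ^ p)⁻¹ := by field_simp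
          _ ≤ (|M₄| + 1) * ((1 - x) ^ p)⁻¹ := by
              apply mul_le_mul_of_nonneg_right h1 (by positivity)
      refine h2.trans ?_
      have h3'' : (1 - x) ^ (-p) ≤ (min x (1 - x)) ^ (-p) :=
        Real.rpow_le_rpow_of_nonpos hmin0 (min_le_right _ _) (by linarith)
      have hM4C : |M₄| + 1 ≤ C := le_trans (le_max_right _ _) (le_max_left _ _)
      exact mul_le_mul hM4C h3'' (by positivity) (by positivity)

lemma step_bound (f : ℝ → ℝ) (p C : ℝ) (hp : 0 ≤ p) (hC : 0 ≤ C)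
    (hdiff : ∀ x ∈ Set.Ioo (0:ℝ) 1, DifferentiableAt ℝ f x)
    (hbound : ∀ x ∈ Set.Ioo (0:ℝ) 1, |deriv f x| ≤ C * (min x (1 - x)) ^ (-p))
    (x Δ : ℝ) (hd0 : 0 < distToInt x) (hΔ : |Δ| ≤ distToInt x / 2) :
    |f (Int.fract (x + Δ)) - f (Int.fract x)| ≤ C * (distToInt x / 2) ^ (-p) * |Δ| := by
  set d := distToInt x with hdd
  have hd2 : d ≤ 1 / 2 := distToInt_le_half x
  have hΔ' : -(d / 2) ≤ Δ ∧ Δ ≤ d / 2 := abs_le.mp hΔ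
  have hud : d ≤ Int.fract x ∧ d ≤ 1 - Int.fract x := by
    constructor
    · rw [hdd, distToInt_eq_min]; exact min_le_left _ _
    · rw [hdd, distToInt_eq_min]; exact min_le_right _ _
  set u := Int.fract x with hu
  have hufr : Int.fract (x + Δ) = u + Δ := by
    have h1 : x + Δ = (⌊x⌋ : ℤ) + (u + Δ) := by
      rw [hu]; unfold Int.fract; push_cast; ring
    rw [h1, Int.fract_intCast_add]
    exact Int.fract_eq_self.mpr ⟨by linarith [hud.1, hΔ'.1], by linarith [hud.2, hΔ'.2]⟩
  set s : Set ℝ := Set.Icc (d / 2) (1 - d / 2) with hs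
  have hsub : s ⊆ Set.Ioo (0:ℝ) 1 := fun t ht => ⟨by linarith [ht.1], by linarith [ht.2]⟩
  have hus : u ∈ s := ⟨by linarith [hud.1], by linarith [hud.2]⟩
  have hus' : u + Δ ∈ s := ⟨by linarith [hud.1, hΔ'.1], by linarith [hud.2, hΔ'.2]⟩
  have hderiv : ∀ t ∈ s, HasDerivWithinAt f (deriv f t) s t := fun t ht =>
    ((hdiff t (hsub ht)).hasDerivAt).hasDerivWithinAt
  have hbd : ∀ t ∈ s, ‖deriv f t‖ ≤ C * (d / 2) ^ (-p) := by
    intro t ht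
    rw [Real.norm_eq_abs]
    refine (hbound t (hsub ht)).trans ?_
    have hmin : d / 2 ≤ min t (1 - t) := le_min (ht.1) (by linarith [ht.2])
    have := Real.rpow_le_rpow_of_nonpos (by linarith : (0:ℝ) < d / 2) hmin
      (by linarith : -p ≤ 0)
    exact mul_le_mul_of_nonneg_left this hC
  have := (convex_Icc (d / 2) (1 - d / 2)).norm_image_sub_le_of_norm_hasDerivWithin_le
    hderiv hbd hus hus'
  rw [hufr]
  calc |f (u + Δ) - f u| = ‖f (u + Δ) - f u‖ := (Real.norm_eq_abs _).symm
    _ ≤ C * (d / 2) ^ (-p) * ‖u + Δ - u‖ := this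
    _ = C * (d / 2) ^ (-p) * |Δ| := by rw [Real.norm_eq_abs]; ring_nf


lemma sum_inv_bound (k : ℕ) (u : ℕ → ℝ) (δ r p : ℝ)
    (hδ0 : 0 < δ) (hδ1 : δ ≤ 1) (hr : 0 < r) (hp1 : 1 ≤ p)
    (hu : ∀ i < k, u i ∈ Set.Ico (0:ℝ) 1)
    (hsep : ∀ i < k, ∀ j < k, i ≠ j → δ ≤ |u i - u j|)
    (hlow : ∀ i < k, r ≤ min (u i) (1 - u i)) :
    ∑ i ∈ Finset.range k, (min (u i) (1 - u i) / 2) ^ (-p)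
      ≤ 2 * ((r / 2) ^ (-p) + (4 / δ) ^ p * (1 + Real.log (1 / δ))) := by
  classical
  set d : ℕ → ℝ := fun i => min (u i) (1 - u i) with hd
  have hd0 : ∀ i < k, 0 < d i := fun i hi => lt_of_lt_of_le hr (hlow i hi)
  have hdhalf : ∀ i < k, d i ≤ 1 / 2 := by
    intro i hi
    rcases le_or_gt (u i) (1 / 2) with h | h
    · exact le_trans (min_le_left _ _) h
    · exact le_trans (min_le_right _ _) (by linarith)
  set key : ℕ → ℕ × Bool := fun i => (⌊d i / (δ / 2)⌋₊, decide (u i ≤ 1 / 2)) with hkey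
  set K : ℕ := ⌊1 / δ⌋₊ with hK
  -- injectivity of the key on range k
  have hinj : ∀ i ∈ Finset.range k, ∀ j ∈ Finset.range k, key i = key j → i = j := by
    intro i hi j hj hkeq
    by_contra hne
    have hik : i < k := Finset.mem_range.mp hi
    have hjk : j < k := Finset.mem_range.mp hj
    have hb : (u i ≤ 1 / 2) ↔ (u j ≤ 1 / 2) := by
      have := congrArg Prod.snd hkeq
      simpa [hkey] using this
    have hn : ⌊d i / (δ / 2)⌋₊ = ⌊d j / (δ / 2)⌋₊ := by
      have := congrArg Prod.fst hkeq
      simpa [hkey] using this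
    have hdd : |d i - d j| < δ / 2 := by
      have h1 : (⌊d i / (δ / 2)⌋₊ : ℝ) ≤ d i / (δ / 2) :=
        Nat.floor_le (div_nonneg (hd0 i hik).le (by linarith))
      have h2 : d i / (δ / 2) < ⌊d i / (δ / 2)⌋₊ + 1 := Nat.lt_floor_add_one _
      have h3 : (⌊d j / (δ / 2)⌋₊ : ℝ) ≤ d j / (δ / 2) :=
        Nat.floor_le (div_nonneg (hd0 j hjk).le (by linarith))
      have h4 : d j / (δ / 2) < ⌊d j / (δ / 2)⌋₊ + 1 := Nat.lt_floor_add_one _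
      rw [hn] at h1 h2
      have h5 : |d i / (δ / 2) - d j / (δ / 2)| < 1 := abs_lt.mpr ⟨by linarith, by linarith⟩
      have h6 : d i / (δ / 2) - d j / (δ / 2) = (d i - d j) / (δ / 2) := by ring
      rw [h6, abs_div, abs_of_pos (by linarith : (0:ℝ) < δ / 2)] at h5
      calc |d i - d j| = |d i - d j| / (δ / 2) * (δ / 2) := by field_simp
        _ < 1 * (δ / 2) := by
            apply mul_lt_mul_of_pos_right h5 (by linarith)
        _ = δ / 2 := one_mul _
    have huu : |u i - u j| = |d i - d j| := by
      rcases le_or_gt (u i) (1 / 2) with hside | hside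
      · have hsj : u j ≤ 1 / 2 := hb.mp hside
        have e1 : d i = u i := min_eq_left (by linarith)
        have e2 : d j = u j := min_eq_left (by linarith)
        rw [e1, e2]
      · have hsj : ¬(u j ≤ 1 / 2) := fun h => hside.not_ge (hb.mpr h)
        push_neg at hsj
        have e1 : d i = 1 - u i := min_eq_right (by linarith)
        have e2 : d j = 1 - u j := min_eq_right (by linarith)
        rw [e1, e2]
        rw [show (1 - u i) - (1 - u j) = -(u i - u j) by ring, abs_neg]
    have := hsep i hik j hjk hne
    rw [huu] at this
    linarith
  -- term bound via the key
  set G : ℕ × Bool → ℝ := fun x => if x.1 = 0 then (r / 2) ^ (-p) else ((x.1 : ℝ) * δ / 4) ^ (-p)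
    with hG
  have hGnonneg : ∀ x : ℕ × Bool, 0 ≤ G x := by
    intro x
    rw [hG]
    dsimp only
    split
    · exact Real.rpow_nonneg (by linarith) _
    · exact Real.rpow_nonneg (by positivity) _
  have hterm : ∀ i < k, (d i / 2) ^ (-p) ≤ G (key i) := by
    intro i hi
    rw [hG, hkey]
    dsimp only
    split
    · exact Real.rpow_le_rpow_of_nonpos (by linarith) (by linarith [hlow i hi]) (by linarith)
    · rename_i hn0
      have h1 : (1:ℕ) ≤ ⌊d i / (δ / 2)⌋₊ := Nat.one_le_iff_ne_zero.mpr hn0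
      have h2 : (⌊d i / (δ / 2)⌋₊ : ℝ) ≤ d i / (δ / 2) :=
        Nat.floor_le (div_nonneg (hd0 i hi).le (by linarith))
      have h3 : (⌊d i / (δ / 2)⌋₊ : ℝ) * δ / 4 ≤ d i / 2 := by
        have := mul_le_mul_of_nonneg_right h2 (by linarith : (0:ℝ) ≤ δ / 2)
        rw [div_mul_cancel₀] at this
        · linarith
        · linarith
      have h4 : (0:ℝ) < (⌊d i / (δ / 2)⌋₊ : ℝ) * δ / 4 := by
        have : (1:ℝ) ≤ (⌊d i / (δ / 2)⌋₊ : ℝ) := by exact_mod_cast h1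
        nlinarith
      exact Real.rpow_le_rpow_of_nonpos h4 h3 (by linarith)
  -- assemble
  have hstep1 : ∑ i ∈ Finset.range k, (d i / 2) ^ (-p) ≤ ∑ i ∈ Finset.range k, G (key i) :=
    Finset.sum_le_sum fun i hi => hterm i (Finset.mem_range.mp hi)
  have hstep2 : ∑ i ∈ Finset.range k, G (key i) = ∑ x ∈ (Finset.range k).image key, G x :=
    (Finset.sum_image hinj).symm
  have hsubset : (Finset.range k).image key ⊆ Finset.range (K + 1) ×ˢ Finset.univ := by
    intro x hx
    obtain ⟨i, hi, hxi⟩ := Finset.mem_image.mp hx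
    have hik : i < k := Finset.mem_range.mp hi
    rw [Finset.mem_product]
    constructor
    · rw [← hxi]
      simp only [hkey, Finset.mem_range]
      have h1 : d i / (δ / 2) ≤ 1 / δ := by
        rw [div_le_div_iff₀ (by linarith) (by linarith)]
        calc d i * δ ≤ (1/2) * δ := by
              apply mul_le_mul_of_nonneg_right (hdhalf i hik) (by linarith)
          _ ≤ 1 * (δ / 2) := by linarith
      have := Nat.floor_le_floor h1
      omega
    · exact Finset.mem_univ _
  have hstep3 : ∑ x ∈ (Finset.range k).image key, G x
      ≤ ∑ x ∈ Finset.range (K + 1) ×ˢ Finset.univ, G x :=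
    Finset.sum_le_sum_of_subset_of_nonneg hsubset (fun x _ _ => hGnonneg x)
  set g : ℕ → ℝ := fun n => if n = 0 then (r / 2) ^ (-p) else ((n : ℝ) * δ / 4) ^ (-p) with hg
  have hstep4 : ∑ x ∈ Finset.range (K + 1) ×ˢ (Finset.univ : Finset Bool), G x
      = 2 * ∑ n ∈ Finset.range (K + 1), g n := by
    rw [Finset.sum_product]
    rw [Finset.mul_sum]
    congr 1
    funext n
    simp [hG, hg]
  have hstep5 : ∑ n ∈ Finset.range (K + 1), g n
      = (∑ j ∈ Finset.range K, g (j + 1)) + (r / 2) ^ (-p) := by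
    rw [Finset.sum_range_succ']
    congr 1
  have hterm2 : ∀ j : ℕ, g (j + 1) ≤ (4 / δ) ^ p * ((j : ℝ) + 1)⁻¹ := by
    intro j
    have hj0 : (0 : ℝ) ≤ (j : ℝ) := by positivity
    have hj1 : (1 : ℝ) ≤ (j : ℝ) + 1 := by linarith
    have hgj : g (j + 1) = (((j : ℝ) + 1) * (δ / 4)) ^ (-p) := by
      rw [hg]
      simp only [Nat.succ_ne_zero, if_false]
      norm_num
      ring_nf
    rw [hgj, Real.mul_rpow (by linarith) (by linarith)]
    have h1 : ((j : ℝ) + 1) ^ (-p) ≤ ((j : ℝ) + 1) ^ (-1 : ℝ) :=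
      Real.rpow_le_rpow_of_exponent_le hj1 (by linarith)
    have h2 : ((j : ℝ) + 1) ^ (-1 : ℝ) = ((j : ℝ) + 1)⁻¹ := Real.rpow_neg_one _
    have h3 : (δ / 4) ^ (-p) = (4 / δ) ^ p := by
      rw [Real.rpow_neg (by linarith), ← Real.inv_rpow (by linarith), inv_div]
    rw [h3, mul_comm]
    exact mul_le_mul_of_nonneg_left (h1.trans_eq h2) (Real.rpow_nonneg (by positivity) _)
  have hstep6 : ∑ j ∈ Finset.range K, g (j + 1)
      ≤ (4 / δ) ^ p * ∑ j ∈ Finset.range K, ((j : ℝ) + 1)⁻¹ := by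
    rw [Finset.mul_sum]
    exact Finset.sum_le_sum fun j _ => hterm2 j
  have hharm : ∑ j ∈ Finset.range K, ((j : ℝ) + 1)⁻¹ = ((harmonic K : ℚ) : ℝ) := by
    rw [harmonic]
    push_cast
    rfl
  have hlog : ((harmonic K : ℚ) : ℝ) ≤ 1 + Real.log (1 / δ) := by
    refine (harmonic_le_one_add_log K).trans ?_
    have hlog0 : 0 ≤ Real.log (1 / δ) := Real.log_nonneg (by rw [le_div_iff₀ hδ0]; linarith)
    rcases Nat.eq_zero_or_pos K with h0 | hpos
    · simp [h0]
      exact Real.log_nonpos hδ0.le hδ1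
    · have h1 : (K : ℝ) ≤ 1 / δ := Nat.floor_le (by positivity)
      have h2 : Real.log (K : ℝ) ≤ Real.log (1 / δ) :=
        Real.log_le_log (by exact_mod_cast hpos) h1
      linarith
  have hsumle : ∑ j ∈ Finset.range K, ((j : ℝ) + 1)⁻¹ ≤ 1 + Real.log (1 / δ) := by
    rw [hharm]; exact hlog
  have h4δ : (0 : ℝ) ≤ (4 / δ) ^ p := Real.rpow_nonneg (by positivity) _
  calc ∑ i ∈ Finset.range k, (d i / 2) ^ (-p)
      ≤ ∑ i ∈ Finset.range k, G (key i) := hstep1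
    _ = ∑ x ∈ (Finset.range k).image key, G x := hstep2
    _ ≤ ∑ x ∈ Finset.range (K + 1) ×ˢ Finset.univ, G x := hstep3
    _ = 2 * ∑ n ∈ Finset.range (K + 1), g n := hstep4
    _ = 2 * ((∑ j ∈ Finset.range K, g (j + 1)) + (r / 2) ^ (-p)) := by rw [hstep5]
    _ ≤ 2 * ((4 / δ) ^ p * (1 + Real.log (1 / δ)) + (r / 2) ^ (-p)) := by
        have hh : (∑ j ∈ Finset.range K, g (j + 1))
            ≤ (4 / δ) ^ p * (1 + Real.log (1 / δ)) :=
          hstep6.trans (mul_le_mul_of_nonneg_left hsumle h4δ)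
        linarith
    _ = 2 * ((r / 2) ^ (-p) + (4 / δ) ^ p * (1 + Real.log (1 / δ))) := by ring


lemma ev_log_le (c B : ℝ) (hc : 0 < c) (j : ℕ) :
    ∀ᶠ N : ℕ in Filter.atTop, B * (Real.log N) ^ j ≤ (N : ℝ) ^ c := by
  set q : ℝ := c / (2 * (j + 1)) with hq
  have hq0 : 0 < q := by positivity
  have h1 : Filter.Tendsto (fun N : ℕ => (N : ℝ) ^ (c / 2)) Filter.atTop Filter.atTop :=
    (tendsto_rpow_atTop (by positivity)).comp tendsto_natCast_atTop_atTop
  filter_upwards [h1.eventually_ge_atTop (B * (1 / q) ^ j), Filter.eventually_ge_atTop 1]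
    with N hN h1N
  have hN' : B * (1 / q) ^ j ≤ (N : ℝ) ^ (c / 2) := by simpa using hN
  have hN1 : (1 : ℝ) ≤ (N : ℝ) := by exact_mod_cast h1N
  have hN0 : (0 : ℝ) < (N : ℝ) := by linarith
  have hlog : Real.log N ≤ (1 / q) * (N : ℝ) ^ q := by
    have h2 : Real.log ((N : ℝ) ^ q) ≤ (N : ℝ) ^ q := by
      have := Real.log_le_sub_one_of_pos (Real.rpow_pos_of_pos hN0 q)
      linarith
    rw [Real.log_rpow hN0] at h2
    calc Real.log N = (1 / q) * (q * Real.log N) := by field_simp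
      _ ≤ (1 / q) * (N : ℝ) ^ q := mul_le_mul_of_nonneg_left h2 (by positivity)
  have hlog0 : 0 ≤ Real.log N := Real.log_nonneg hN1
  have h3 : (Real.log N) ^ j ≤ ((1 / q) * (N : ℝ) ^ q) ^ j := pow_le_pow_left₀ hlog0 hlog j
  have h4 : ((1 / q) * (N : ℝ) ^ q) ^ j = (1 / q) ^ j * ((N : ℝ) ^ q) ^ j := mul_pow _ _ _
  have h5 : ((N : ℝ) ^ q) ^ j = (N : ℝ) ^ (q * j) := by
    rw [← Real.rpow_natCast ((N : ℝ) ^ q) j, ← Real.rpow_mul hN0.le]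
  have h6 : q * j ≤ c / 2 := by
    rw [hq, div_mul_eq_mul_div, div_le_div_iff₀ (by positivity) (by norm_num)]
    nlinarith [hc.le, Nat.cast_nonneg (α := ℝ) j]
  rcases le_or_gt B 0 with hB | hB
  · calc B * (Real.log N) ^ j ≤ 0 := mul_nonpos_of_nonpos_of_nonneg hB (pow_nonneg hlog0 j)
      _ ≤ (N : ℝ) ^ c := Real.rpow_nonneg hN0.le c
  · have hmul : B * (Real.log N) ^ j ≤ B * ((1 / q) ^ j * (N : ℝ) ^ (q * j)) := by
      apply mul_le_mul_of_nonneg_left _ hB.le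
      rw [← h5, ← h4]; exact h3
    refine hmul.trans ?_
    have hsplit : B * ((1 / q) ^ j * (N : ℝ) ^ (q * j)) = (B * (1 / q) ^ j) * (N : ℝ) ^ (q * j) := by
      ring
    rw [hsplit]
    calc (B * (1 / q) ^ j) * (N : ℝ) ^ (q * j)
        ≤ (N : ℝ) ^ (c / 2) * (N : ℝ) ^ (q * j) :=
          mul_le_mul_of_nonneg_right hN' (Real.rpow_nonneg hN0.le _)
      _ = (N : ℝ) ^ (c / 2 + q * j) := (Real.rpow_add hN0 _ _).symm
      _ ≤ (N : ℝ) ^ c := Real.rpow_le_rpow_of_exponent_le hN1 (by linarith)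

end AuxSep

set_option maxHeartbeats 1000000 in
/-- Precise control at intermediate scales: for `e ∈ (2/3, 1)`, if `a, ā` are
`1/N`-close and the orbit of `a` avoids a `1/(N^e (log N)⁶)`-neighbourhood of `0` for
`k ≤ N^e (log N)⁴` steps, then `|S_k f(ā) - S_k f(a)| ≤ N^{(3/2 - 0.9η)e - 1}`. -/
theorem stmt13 (η : ℝ) (hη : η ∈ Set.Ioo (0 : ℝ) (1 / 2)) (f : ℝ → ℝ)
    (hf : IsKocherginRoof (1 / 2 - η) f)
    (α : ℝ) (hα : α ∈ Set.Ioo (0 : ℝ) 1) (hirr : Irrational α) (hslow : SlowDens α)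
    (e : ℝ) (he : e ∈ Set.Ioo (2 / 3 : ℝ) 1) :
    ∃ N₀ : ℕ, ∀ N : ℕ, N₀ ≤ N → ∀ k : ℕ, (k : ℝ) ≤ (N : ℝ) ^ e * (Real.log N) ^ 4 →
      ∀ a abar : ℝ, |abar - a| ≤ 1 / N →
      (∀ i : ℕ, i ≤ k → 1 / ((N : ℝ) ^ e * (Real.log N) ^ 6) < distToInt (a + i * α)) →
      |birkS α f k abar - birkS α f k a| ≤
        (N : ℝ) ^ ((3 / 2 - (9 / 10) * η) * e - 1) := by
  obtain ⟨hη0, hη2⟩ := hη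
  obtain ⟨he1, he2⟩ := he
  obtain ⟨hC2, hfpos, hconv2, hint, M₁, M₂, M₃, M₄, hM₁, hM₂, hM₃, hM₄, hT1, hT2, hT3, hT4⟩ := hf
  set p : ℝ := 1 / 2 - η + 1 with hp
  have hp1 : 1 ≤ p := by rw [hp]; linarith
  have hp2 : p ≤ 2 := by rw [hp]; linarith
  have hp0 : 0 < p := by linarith
  obtain ⟨C, hC1, hCb⟩ := deriv_bound p hp0 f hC2 M₃ M₄ hT3 hT4
  have hC0 : (0 : ℝ) ≤ C := by linarith
  have hdiff : ∀ x ∈ Set.Ioo (0 : ℝ) 1, DifferentiableAt ℝ f x := fun x hx =>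
    (hC2.differentiableOn (by norm_num)).differentiableAt (isOpen_Ioo.mem_nhds hx)
  obtain ⟨A, hA1, hAsep⟩ := key_sep α hirr hslow
  -- eventual conditions on N
  have hev : ∀ᶠ N : ℕ in Filter.atTop,
      ((3 : ℝ) ≤ (N : ℝ) ∧ 2 * (Real.log N) ^ 6 ≤ (N : ℝ) ^ (1 - e)) ∧
      (A ≤ (N : ℝ) ^ e ∧ 4 * (Real.log N) ^ 4 ≤ (N : ℝ) ^ (1 - e)) ∧
      1600 * C * (Real.log N) ^ 13 ≤ (N : ℝ) ^ (e * η / 10) := by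
    have e1 : ∀ᶠ N : ℕ in Filter.atTop, (3 : ℝ) ≤ (N : ℝ) := by
      filter_upwards [Filter.eventually_ge_atTop 3] with N h
      exact_mod_cast h
    have e2 := ev_log_le (1 - e) 2 (by linarith) 6
    have e3 : ∀ᶠ N : ℕ in Filter.atTop, A ≤ (N : ℝ) ^ e := by
      have := ((tendsto_rpow_atTop (by linarith : (0 : ℝ) < e)).comp
        tendsto_natCast_atTop_atTop).eventually_ge_atTop A
      filter_upwards [this] with N h
      simpa using h
    have e4 := ev_log_le (1 - e) 4 (by linarith) 4
    have e5 := ev_log_le (e * η / 10) (1600 * C)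
      (div_pos (mul_pos (by linarith) hη0) (by norm_num)) 13
    filter_upwards [e1, e2, e3, e4, e5] with N h1 h2 h3 h4 h5
    exact ⟨⟨h1, h2⟩, ⟨h3, h4⟩, h5⟩
  obtain ⟨N₀, hN₀⟩ := Filter.eventually_atTop.mp hev
  refine ⟨N₀, ?_⟩
  intro N hNge k hk a abar hab horbit
  obtain ⟨⟨hN3, hcond2⟩, ⟨hcond3, hcond4⟩, hcond5⟩ := hN₀ N hNge
  set L := Real.log N with hL
  have hNR0 : (0 : ℝ) < (N : ℝ) := by linarith
  have hL1 : (1 : ℝ) ≤ L := by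
    have hlog3 : (1 : ℝ) ≤ Real.log 3 := by
      rw [Real.le_log_iff_exp_le (by norm_num)]
      calc Real.exp 1 ≤ 2.7182818286 := Real.exp_one_lt_d9.le
        _ ≤ 3 := by norm_num
    calc (1 : ℝ) ≤ Real.log 3 := hlog3
      _ ≤ L := Real.log_le_log (by norm_num) hN3
  have hL0 : (0 : ℝ) ≤ L := by linarith
  rcases Nat.eq_zero_or_pos k with rfl | hk1
  · simp only [birkS, Finset.range_zero, Finset.sum_empty, sub_zero, abs_zero]
    positivity
  -- basic quantities
  have hNe0 : (0 : ℝ) < (N : ℝ) ^ e := Real.rpow_pos_of_pos hNR0 e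
  have hNe1 : (1 : ℝ) ≤ (N : ℝ) ^ e := by
    have := Real.rpow_le_rpow_of_exponent_le (by linarith : (1 : ℝ) ≤ (N : ℝ))
      (by linarith : (0 : ℝ) ≤ e)
    simpa [Real.rpow_zero] using this
  have hL6 : (1 : ℝ) ≤ L ^ 6 := one_le_pow₀ hL1
  set X : ℝ := (N : ℝ) ^ e * L ^ 6 with hX
  have hX1 : (1 : ℝ) ≤ X := by
    calc (1 : ℝ) = 1 * 1 := by norm_num
      _ ≤ (N : ℝ) ^ e * L ^ 6 := mul_le_mul hNe1 hL6 (by norm_num) (by positivity)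
      _ = X := hX.symm
  have hX0 : (0 : ℝ) < X := by linarith
  have hNN : (N : ℝ) ^ e * (N : ℝ) ^ (1 - e) = (N : ℝ) := by
    rw [← Real.rpow_add hNR0]
    norm_num
  have hNX : 2 * X ≤ (N : ℝ) := by
    have h2 : (N : ℝ) ^ e * (2 * L ^ 6) ≤ (N : ℝ) ^ e * (N : ℝ) ^ (1 - e) :=
      mul_le_mul_of_nonneg_left hcond2 hNe0.le
    calc 2 * X = (N : ℝ) ^ e * (2 * L ^ 6) := by rw [hX]; ring
      _ ≤ (N : ℝ) ^ e * (N : ℝ) ^ (1 - e) := h2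
      _ = (N : ℝ) := hNN
  have hrN : 1 / (N : ℝ) ≤ (1 / X) / 2 := by
    have h1 : (1 / X) / 2 = 1 / (2 * X) := by ring
    rw [h1]
    exact one_div_le_one_div_of_le (by linarith) hNX
  -- the orbit values
  set u : ℕ → ℝ := fun i => Int.fract (a + i * α) with hu
  have hdeq : ∀ i : ℕ, distToInt (a + i * α) = min (u i) (1 - u i) := fun i =>
    distToInt_eq_min _
  -- per-index mean value bound
  have hstep : ∀ i ∈ Finset.range k,
      |f (Int.fract (abar + i * α)) - f (Int.fract (a + i * α))|
        ≤ C * (distToInt (a + i * α) / 2) ^ (-p) * |abar - a| := by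
    intro i hi
    have hik : i < k := Finset.mem_range.mp hi
    have hd : 1 / X < distToInt (a + i * α) := horbit i hik.le
    have hd0 : 0 < distToInt (a + i * α) := lt_trans (by positivity) hd
    have hΔ : |abar - a| ≤ distToInt (a + i * α) / 2 := by
      calc |abar - a| ≤ 1 / (N : ℝ) := hab
        _ ≤ (1 / X) / 2 := hrN
        _ ≤ distToInt (a + i * α) / 2 := by linarith
    have := step_bound f p C (by linarith) hC0 hdiff hCb (a + i * α) (abar - a) hd0 hΔ
    rwa [show a + i * α + (abar - a) = abar + i * α by ring] at this
  -- separation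
  set Qb := max A (2 * (k : ℝ) * Real.log (2 * (k : ℝ)) ^ 2) with hQb
  have hQb1 : (1 : ℝ) ≤ Qb := le_trans hA1 (le_max_left _ _)
  have hQb0 : (0 : ℝ) < Qb := by linarith
  set δ₀ : ℝ := 1 / (2 * Qb) with hδ
  have hδ0 : 0 < δ₀ := by rw [hδ]; positivity
  have hδ1 : δ₀ ≤ 1 := by
    rw [hδ, div_le_one (by linarith)]
    linarith
  have hpair : ∀ i j : ℕ, j < i → i < k → δ₀ ≤ |u i - u j| := by
    intro i j hji hik
    have hq1 : 1 ≤ i - j := by omega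
    have hqk : i - j ≤ k := by omega
    have hbound := hAsep k hk1 (i - j) hq1 hqk
    have hcast : ((i - j : ℕ) : ℝ) = (i : ℝ) - (j : ℝ) := by
      push_cast [Nat.cast_sub hji.le]
      ring
    have hchain : distToInt (((i - j : ℕ) : ℝ) * α) ≤ |u i - u j| := by
      have h1 : ((i : ℝ) - (j : ℝ)) * α = (a + i * α) - (a + j * α) := by ring
      rw [hcast, h1]
      exact distToInt_fract_sub _ _
    exact le_trans hbound hchain
  have hsep : ∀ i < k, ∀ j < k, i ≠ j → δ₀ ≤ |u i - u j| := by
    intro i hik j hjk hne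
    rcases Nat.lt_or_ge j i with h | h
    · exact hpair i j h hik
    · rw [abs_sub_comm]
      exact hpair j i (by omega) hjk
  have hu_mem : ∀ i < k, u i ∈ Set.Ico (0 : ℝ) 1 := fun i _ =>
    ⟨Int.fract_nonneg _, Int.fract_lt_one _⟩
  have hlow : ∀ i < k, 1 / X ≤ min (u i) (1 - u i) := fun i hi => by
    rw [← hdeq i]
    exact (horbit i hi.le).le
  have hsum_bound := sum_inv_bound k u δ₀ (1 / X) p hδ0 hδ1 (by positivity) hp1
    hu_mem hsep hlow
  -- numeric estimates
  have hk1R : (1 : ℝ) ≤ (k : ℝ) := by exact_mod_cast hk1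
  have h2kN : 2 * (k : ℝ) ≤ (N : ℝ) := by
    have hmul : (N : ℝ) ^ e * (4 * L ^ 4) ≤ (N : ℝ) ^ e * (N : ℝ) ^ (1 - e) :=
      mul_le_mul_of_nonneg_left hcond4 hNe0.le
    have h2 : 4 * ((N : ℝ) ^ e * L ^ 4) ≤ (N : ℝ) := by
      calc 4 * ((N : ℝ) ^ e * L ^ 4) = (N : ℝ) ^ e * (4 * L ^ 4) := by ring
        _ ≤ (N : ℝ) ^ e * (N : ℝ) ^ (1 - e) := hmul
        _ = (N : ℝ) := hNN
    linarith
  have hlog2k : Real.log (2 * (k : ℝ)) ≤ L := Real.log_le_log (by linarith) h2kN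
  have hlog2k0 : 0 ≤ Real.log (2 * (k : ℝ)) := Real.log_nonneg (by linarith)
  have hsq2k : Real.log (2 * (k : ℝ)) ^ 2 ≤ L ^ 2 := pow_le_pow_left₀ hlog2k0 hlog2k 2
  have hQbX : Qb ≤ 2 * X := by
    rw [hQb]
    apply max_le
    · calc A ≤ (N : ℝ) ^ e := hcond3
        _ ≤ X := by rw [hX]; exact le_mul_of_one_le_right hNe0.le hL6
        _ ≤ 2 * X := by linarith
    · calc 2 * (k : ℝ) * Real.log (2 * (k : ℝ)) ^ 2
          ≤ 2 * ((N : ℝ) ^ e * L ^ 4) * L ^ 2 := by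
            apply mul_le_mul (by linarith) hsq2k (by positivity) (by positivity)
        _ = 2 * X := by rw [hX]; ring
  have hNep0 : (0 : ℝ) < (N : ℝ) ^ (e * p) := Real.rpow_pos_of_pos hNR0 _
  have hyp2 : ∀ y : ℝ, 1 ≤ y → y ^ p ≤ y ^ (2 : ℕ) := by
    intro y hy
    calc y ^ p ≤ y ^ (2 : ℝ) := Real.rpow_le_rpow_of_exponent_le hy hp2
      _ = y ^ (2 : ℕ) := by
          rw [show (2 : ℝ) = ((2 : ℕ) : ℝ) by norm_num, Real.rpow_natCast]
  have hL6p : (L ^ 6) ^ p ≤ L ^ 12 := by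
    calc (L ^ 6) ^ p ≤ (L ^ 6) ^ (2 : ℕ) := hyp2 _ hL6
      _ = L ^ 12 := by ring
  have hNe_p : ((N : ℝ) ^ e) ^ p = (N : ℝ) ^ (e * p) := by
    rw [← Real.rpow_mul hNR0.le]
  -- E1
  have hE1 : ((1 / X) / 2) ^ (-p) ≤ 4 * (N : ℝ) ^ (e * p) * L ^ 13 := by
    have hL1213 : L ^ 12 ≤ L ^ 13 := pow_le_pow_right₀ hL1 (by norm_num)
    have hL6p' : (L ^ 6) ^ p ≤ L ^ 13 := hL6p.trans hL1213
    have h0 : (1 / X) / 2 = (2 * X)⁻¹ := by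
      rw [mul_inv]
      ring
    have h1 : ((2 * X)⁻¹) ^ (-p) = (2 * X) ^ p := by
      rw [Real.inv_rpow (by positivity), Real.rpow_neg (by positivity), inv_inv]
    have h2 : (2 * X) ^ p = 2 ^ p * ((N : ℝ) ^ e) ^ p * (L ^ 6) ^ p := by
      rw [hX, show (2 : ℝ) * ((N : ℝ) ^ e * L ^ 6) = 2 * (N : ℝ) ^ e * L ^ 6 by ring]
      rw [Real.mul_rpow (by positivity) (by positivity),
        Real.mul_rpow (by norm_num) (by positivity)]
    have h3 : (2 : ℝ) ^ p ≤ 4 := by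
      calc (2 : ℝ) ^ p ≤ (2 : ℝ) ^ (2 : ℕ) := hyp2 2 (by norm_num)
        _ = 4 := by norm_num
    calc ((1 / X) / 2) ^ (-p) = (2 * X) ^ p := by rw [h0, h1]
      _ = 2 ^ p * (N : ℝ) ^ (e * p) * (L ^ 6) ^ p := by rw [h2, hNe_p]
      _ ≤ 4 * (N : ℝ) ^ (e * p) * L ^ 13 := by
          apply mul_le_mul (mul_le_mul h3 le_rfl hNep0.le (by norm_num)) hL6p'
            (Real.rpow_nonneg (by positivity) _) (by positivity)
  -- E3
  have hQbne : Qb ≠ 0 := ne_of_gt hQb0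
  have hδval : 4 / δ₀ = 8 * Qb := by
    rw [hδ]
    field_simp
    ring
  have hinvδ : 1 / δ₀ = 2 * Qb := by
    rw [hδ, one_div_one_div]
  have hE3a : (4 / δ₀) ^ p ≤ (16 * X) ^ p := by
    rw [hδval]
    exact Real.rpow_le_rpow (by linarith) (by linarith) (by linarith)
  have hE3b : (16 * X) ^ p ≤ 256 * (N : ℝ) ^ (e * p) * L ^ 12 := by
    have h2 : (16 * X) ^ p = 16 ^ p * ((N : ℝ) ^ e) ^ p * (L ^ 6) ^ p := by
      rw [hX, show (16 : ℝ) * ((N : ℝ) ^ e * L ^ 6) = 16 * (N : ℝ) ^ e * L ^ 6 by ring]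
      rw [Real.mul_rpow (by positivity) (by positivity),
        Real.mul_rpow (by norm_num) (by positivity)]
    have h3 : (16 : ℝ) ^ p ≤ 256 := by
      calc (16 : ℝ) ^ p ≤ (16 : ℝ) ^ (2 : ℕ) := hyp2 16 (by norm_num)
        _ = 256 := by norm_num
    calc (16 * X) ^ p = 16 ^ p * (N : ℝ) ^ (e * p) * (L ^ 6) ^ p := by rw [h2, hNe_p]
      _ ≤ 256 * (N : ℝ) ^ (e * p) * L ^ 12 := by
          apply mul_le_mul (mul_le_mul h3 le_rfl hNep0.le (by norm_num)) hL6p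
            (Real.rpow_nonneg (by positivity) _) (by positivity)
  have hlogδ : Real.log (1 / δ₀) ≤ 2 * L := by
    rw [hinvδ]
    have h2Qb : 2 * Qb ≤ (N : ℝ) ^ (2 : ℕ) := by
      calc 2 * Qb ≤ 4 * X := by linarith
        _ ≤ 2 * (N : ℝ) := by linarith
        _ ≤ (N : ℝ) ^ (2 : ℕ) := by
            have h := mul_le_mul_of_nonneg_left (show (2:ℝ) ≤ (N:ℝ) by linarith) hNR0.le
            calc 2 * (N : ℝ) = (N : ℝ) * 2 := by ring
              _ ≤ (N : ℝ) * (N : ℝ) := h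
              _ = (N : ℝ) ^ (2 : ℕ) := (pow_two (N : ℝ)).symm
    calc Real.log (2 * Qb) ≤ Real.log ((N : ℝ) ^ (2 : ℕ)) :=
          Real.log_le_log (by linarith) h2Qb
      _ = 2 * L := by rw [Real.log_pow]; push_cast; ring
  have hlogδ0 : 0 ≤ Real.log (1 / δ₀) := by
    rw [hinvδ]
    exact Real.log_nonneg (by linarith)
  have hE4 : 1 + Real.log (1 / δ₀) ≤ 3 * L := by linarith
  have hE3 : (4 / δ₀) ^ p * (1 + Real.log (1 / δ₀))
      ≤ 768 * (N : ℝ) ^ (e * p) * L ^ 13 := by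
    calc (4 / δ₀) ^ p * (1 + Real.log (1 / δ₀))
        ≤ (256 * (N : ℝ) ^ (e * p) * L ^ 12) * (3 * L) := by
          apply mul_le_mul (hE3a.trans hE3b) hE4 (by linarith)
            (by positivity)
      _ = 768 * (N : ℝ) ^ (e * p) * L ^ 13 := by ring
  -- total sum bound
  have hsum_total : ∑ i ∈ Finset.range k, (min (u i) (1 - u i) / 2) ^ (-p)
      ≤ 1544 * (N : ℝ) ^ (e * p) * L ^ 13 := by
    refine hsum_bound.trans ?_
    calc 2 * (((1 / X) / 2) ^ (-p) + (4 / δ₀) ^ p * (1 + Real.log (1 / δ₀)))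
        ≤ 2 * ((4 * (N : ℝ) ^ (e * p) * L ^ 13) + 768 * (N : ℝ) ^ (e * p) * L ^ 13) := by
          linarith
      _ = 1544 * (N : ℝ) ^ (e * p) * L ^ 13 := by ring
  -- final absorption
  have hfinal : C * (1 / (N : ℝ)) * (1544 * (N : ℝ) ^ (e * p) * L ^ 13)
      ≤ (N : ℝ) ^ ((3 / 2 - (9 / 10) * η) * e - 1) := by
    have h5 : 1544 * C * L ^ 13 ≤ (N : ℝ) ^ (e * η / 10) := by
      refine le_trans ?_ hcond5
      linarith [mul_nonneg hC0 (pow_nonneg hL0 13)]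
    have heq2 : (N : ℝ) ^ ((3 / 2 - (9 / 10) * η) * e - 1)
        = (N : ℝ) ^ (e * η / 10) * ((N : ℝ) ^ (e * p) / (N : ℝ)) := by
      rw [show (3 / 2 - (9 / 10) * η) * e - 1 = e * η / 10 + (e * p - 1) from by
        rw [hp]; ring]
      rw [Real.rpow_add hNR0, Real.rpow_sub hNR0, Real.rpow_one]
    rw [heq2, show C * (1 / (N : ℝ)) * (1544 * (N : ℝ) ^ (e * p) * L ^ 13)
      = (1544 * C * L ^ 13) * ((N : ℝ) ^ (e * p) / (N : ℝ)) from by ring]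
    exact mul_le_mul_of_nonneg_right h5 (by positivity)
  -- put everything together
  have hsum_nonneg : (0 : ℝ) ≤ ∑ i ∈ Finset.range k, (min (u i) (1 - u i) / 2) ^ (-p) := by
    apply Finset.sum_nonneg
    intro i hi
    have h1 := hlow i (Finset.mem_range.mp hi)
    have h2 : (0 : ℝ) < 1 / X := by positivity
    exact Real.rpow_nonneg (by linarith) _
  calc |birkS α f k abar - birkS α f k a|
      = |∑ i ∈ Finset.range k,
          (f (Int.fract (abar + i * α)) - f (Int.fract (a + i * α)))| := by
        rw [birkS, birkS, ← Finset.sum_sub_distrib]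
    _ ≤ ∑ i ∈ Finset.range k,
          |f (Int.fract (abar + i * α)) - f (Int.fract (a + i * α))| :=
        Finset.abs_sum_le_sum_abs _ _
    _ ≤ ∑ i ∈ Finset.range k, C * (distToInt (a + i * α) / 2) ^ (-p) * |abar - a| :=
        Finset.sum_le_sum hstep
    _ = C * |abar - a| * ∑ i ∈ Finset.range k, (min (u i) (1 - u i) / 2) ^ (-p) := by
        rw [Finset.mul_sum]
        refine Finset.sum_congr rfl fun i _ => ?_
        rw [hdeq i]
        ring
    _ ≤ C * (1 / (N : ℝ)) * (1544 * (N : ℝ) ^ (e * p) * L ^ 13) := by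
        apply mul_le_mul (mul_le_mul_of_nonneg_left hab hC0) hsum_total hsum_nonneg
          (by positivity)
    _ ≤ (N : ℝ) ^ ((3 / 2 - (9 / 10) * η) * e - 1) := hfinal
end

section
/- Let α ∈ (0,1) be irrational and let (q_n) be the sequence of denominators of its continued fraction convergents. Then for every n ≥ 1 and every x ∈ ℝ there exists an integer j with 0 ≤ j < q_n and ‖jα − x‖ ≤ 2/q_n. -/
theorem isCoprime_of_mul_sub_mul_eq_unit {R : Type*} [CommRing R] {a b c d u : R}
    (hu : IsUnit u) (h : a * d - b * c = u) : IsCoprime a b := by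
  obtain ⟨w, hw⟩ := hu.exists_left_inv
  exact ⟨w * d, -(w * c), by linear_combination w * h + hw⟩

theorem IsCoprime.exists_nat_lt_dvd_mul_sub {p q : ℤ} (h : IsCoprime p q) (hq : 0 < q) (m : ℤ) :
    ∃ j : ℕ, (j : ℤ) < q ∧ q ∣ j * p - m := by
  obtain ⟨u, v, huv⟩ := h
  refine ⟨(m * u % q).toNat, ?_, ?_⟩
  · rw [Int.toNat_of_nonneg (Int.emod_nonneg _ hq.ne')]
    exact Int.emod_lt_of_pos _ hq
  · rw [Int.toNat_of_nonneg (Int.emod_nonneg _ hq.ne'), Int.emod_def]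
    exact ⟨-(m * v) - m * u / q * p, by linear_combination m * huv⟩

theorem distToInt_le_abs_sub_intCast (y : ℝ) (t : ℤ) : distToInt y ≤ |y - t| :=
  round_le y t

theorem abs_round_mul_div_sub_le {q : ℝ} (hq : 0 < q) (x : ℝ) :
    |round (q * x) / q - x| ≤ 1 / (2 * q) := by
  have h := abs_sub_round (q * x)
  rw [show (round (q * x) : ℝ) / q - x = -(q * x - round (q * x)) / q by field_simp; ring,
    abs_div, abs_neg, abs_of_pos hq, div_le_div_iff₀ hq (by positivity)]
  nlinarith

theorem exists_nat_lt_distToInt_le_of_abs_sub_div_le {α : ℝ} {p q : ℤ} (hq : 0 < q)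
    (hpq : IsCoprime p q) (hα : |α - p / q| ≤ 1 / q ^ 2) (x : ℝ) :
    ∃ j : ℕ, (j : ℝ) < q ∧ distToInt (j * α - x) ≤ 3 / (2 * q) := by
  set m := round ((q : ℝ) * x)
  obtain ⟨j, hjq, t, ht⟩ := hpq.exists_nat_lt_dvd_mul_sub hq m
  have hqR : (0 : ℝ) < q := by exact_mod_cast hq
  have hjqR : (j : ℝ) < q := by exact_mod_cast hjq
  have hjα : |j * (α - p / q)| ≤ 1 / q := by
    rw [abs_mul, Nat.abs_cast]
    calc (j : ℝ) * |α - p / q| ≤ q * (1 / q ^ 2) := by gcongr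
      _ = 1 / q := by field_simp
  have hsplit : j * α - x - t = j * (α - p / q) + (m / q - x) := by
    have htR : (t : ℝ) = (j * p - m) / q := by
      have hdvd : ((j * p - m : ℤ) : ℝ) = q * t := by rw [ht]; push_cast; ring
      push_cast at hdvd
      rw [eq_div_iff hqR.ne']; linarith
    rw [htR]; field_simp; ring
  refine ⟨j, hjqR, ?_⟩
  calc distToInt (j * α - x) ≤ |j * α - x - t| := distToInt_le_abs_sub_intCast _ t
    _ ≤ |j * (α - p / q)| + |m / q - x| := hsplit ▸ abs_add_le _ _
    _ ≤ 1 / q + 1 / (2 * q) := add_le_add hjα (abs_round_mul_div_sub_le hqR x)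
    _ = 3 / (2 * q) := by field_simp; norm_num

namespace GenContFract

variable {K : Type*} [Field K] [LinearOrder K] [FloorRing K] {v : K} {n : ℕ}

theorem exists_int_eq_contsAux (v : K) (n : ℕ) :
    ∃ a b : ℤ, (GenContFract.of v).contsAux n = ⟨a, b⟩ := by
  induction n using Nat.twoStepInduction with
  | zero => exact ⟨1, 0, by simp [contsAux]⟩
  | one => exact ⟨⌊v⌋, 1, by simp [contsAux, of_h_eq_floor]⟩
  | more n ih ih' =>
    obtain ⟨a, b, hab⟩ := ih
    obtain ⟨a', b', hab'⟩ := ih'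
    rcases hs : (GenContFract.of v).s.get? n with _ | gp
    · exact ⟨a', b', by rw [contsAux_stable_of_terminated n.succ.le_succ hs, hab']⟩
    · obtain ⟨hgp_a, z, hgp_b⟩ := of_partNum_eq_one_and_exists_int_partDen_eq hs
      refine ⟨z * a' + a, z * b' + b, ?_⟩
      rw [contsAux_recurrence hs hab hab', hgp_a, hgp_b]
      push_cast; ring_nf

theorem exists_int_eq_nums_dens (v : K) (n : ℕ) :
    ∃ p q : ℤ, (GenContFract.of v).nums n = p ∧ (GenContFract.of v).dens n = q := by
  obtain ⟨p, q, h⟩ := exists_int_eq_contsAux v (n + 1)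
  exact ⟨p, q, by rw [num_eq_conts_a, nth_cont_eq_succ_nth_contAux, h],
    by rw [den_eq_conts_b, nth_cont_eq_succ_nth_contAux, h]⟩

theorem one_le_of_den [IsStrictOrderedRing K] (n : ℕ) : 1 ≤ (GenContFract.of v).dens n :=
  zeroth_den_eq_one (g := GenContFract.of v) ▸
    (monotone_nat_of_le_succ fun _ ↦ of_den_mono : Monotone (GenContFract.of v).dens) n.zero_le

theorem abs_sub_convs_le_one_div_dens_sq [IsStrictOrderedRing K]
    (h : ¬(GenContFract.of v).TerminatedAt n) :
    |v - (GenContFract.of v).convs n| ≤ 1 / (GenContFract.of v).dens n ^ 2 := by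
  have hq := one_le_of_den (v := v) n
  calc |v - (GenContFract.of v).convs n|
      ≤ 1 / ((GenContFract.of v).dens n * (GenContFract.of v).dens (n + 1)) :=
        abs_sub_convs_le h
    _ ≤ 1 / (GenContFract.of v).dens n ^ 2 := by
      rw [sq]; gcongr; exact of_den_mono

theorem isCoprime_of_nums_eq_of_dens_eq [IsStrictOrderedRing K]
    (h : ¬(GenContFract.of v).TerminatedAt n) {p q : ℤ}
    (hp : (GenContFract.of v).nums n = p) (hq : (GenContFract.of v).dens n = q) :
    IsCoprime p q := by
  obtain ⟨p', q', hp', hq'⟩ := exists_int_eq_nums_dens v (n + 1)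
  refine isCoprime_of_mul_sub_mul_eq_unit (c := p') (d := q') (isUnit_neg_one.pow (n + 1)) ?_
  have hdet := SimpContFract.determinant (s := SimpContFract.of v) h
  exact_mod_cast (show ((p * q' - q * p' : ℤ) : K) = ((-1) ^ (n + 1) : ℤ) by
    push_cast; rw [← hp, ← hq, ← hp', ← hq']; exact hdet)

end GenContFract

theorem Irrational.not_terminatedAt_of {v : ℝ} (hv : Irrational v) (n : ℕ) :
    ¬(GenContFract.of v).TerminatedAt n := fun h ↦
  let ⟨q, hq⟩ := (GenContFract.terminates_iff_rat v).mp ⟨n, h⟩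
  hv ⟨q, hq.symm⟩

theorem stmt15_general (α : ℝ) (hirr : Irrational α) :
    ∀ n : ℕ, 1 ≤ n → ∀ x : ℝ, ∃ j : ℕ,
      (j : ℝ) < (GenContFract.of α).dens n ∧
      distToInt (j * α - x) ≤ 2 / (GenContFract.of α).dens n := by
  intro n _ x
  have hnt := hirr.not_terminatedAt_of n
  obtain ⟨p, q, hp, hq⟩ := GenContFract.exists_int_eq_nums_dens α n
  have hq1 : (1 : ℝ) ≤ q := hq ▸ GenContFract.one_le_of_den n
  have happrox : |α - p / q| ≤ 1 / (q : ℝ) ^ 2 := by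
    rw [← hp, ← hq, ← GenContFract.conv_eq_num_div_den]
    exact GenContFract.abs_sub_convs_le_one_div_dens_sq hnt
  obtain ⟨j, hj, hdist⟩ := exists_nat_lt_distToInt_le_of_abs_sub_div_le (by exact_mod_cast hq1)
    (GenContFract.isCoprime_of_nums_eq_of_dens_eq hnt hp hq) happrox x
  refine ⟨j, hq ▸ hj, hq ▸ hdist.trans ?_⟩
  rw [div_le_div_iff₀ (by positivity) (by positivity)]
  nlinarith

/-- The orbit `{jα}_{0 ≤ j < q_n}` of the rotation by `α` is `2/q_n`-dense on the
circle, where `q_n` is the `n`-th continued fraction denominator of `α`. -/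
theorem stmt15 (α : ℝ) (hα : α ∈ Set.Ioo (0 : ℝ) 1) (hirr : Irrational α) :
    ∀ n : ℕ, 1 ≤ n → ∀ x : ℝ, ∃ j : ℕ,
      (j : ℝ) < (GenContFract.of α).dens n ∧
      distToInt (j * α - x) ≤ 2 / (GenContFract.of α).dens n :=
  stmt15_general α hirr
end
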